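/- arXiv:2101.04305 — 4 statements merged into one kernel-verified Lean document; each statement's English description precedes it below -/
import Mathlib

section
/- For $\epsilon = \tfrac12$, the commuting operator $J_{1/2} = (\mathcal{P}\otimes I)Q_{1/2}$ with $Q_{1/2} = \begin{pmatrix} \Delta & 2g(g-a) \\ 2g(g+a^\dagger) & \Delta \end{pmatrix}$ satisfies $J_{1/2}^2 = 4g^2 H^{1/2} + (4g^4 + 2g^2 + \Delta^2) I$. -/
open Polynomial

noncomputable section

/-- The space of operators on `ℂ[x]`. -/
abbrev E := Module.End ℂ (Polynomial ℂ)

/-- Annihilation operator `a = d/dx`. -/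
def opA : E := Polynomial.derivative

/-- Creation operator `a† = ` multiplication by `x`. -/
def opC : E := LinearMap.mulLeft ℂ (X : Polynomial ℂ)

/-- Parity operator `(𝒫 f)(x) = f(-x)`. -/
def opP : E := (aeval (-X : Polynomial ℂ)).toLinearMap

/-- `2×2` matrices of operators, i.e. operators on `ℂ[x] ⊗ ℂ²`. -/
abbrev M2 := Matrix (Fin 2) (Fin 2) E

/-- The asymmetric quantum Rabi Hamiltonian
`H^ε = a†a + Δ σx + g (a+a†) σz + ε σz`. -/
def Hop (g Δ ε : ℝ) : M2 :=
  !![opC * opA + (g : ℂ) • (opA + opC) + (ε : ℂ) • 1, (Δ : ℂ) • 1;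
     (Δ : ℂ) • 1, opC * opA - (g : ℂ) • (opA + opC) - (ε : ℂ) • 1]

/-- The parity operator `𝒫 ⊗ I` on `ℂ[x] ⊗ ℂ²`. -/
def Pm : M2 := !![opP, 0; 0, opP]

end

/-- The matrix `Q_{1/2}` for `ε = 1/2`. -/
noncomputable def Q12 (g Δ : ℝ) : M2 :=
  !![(Δ : ℂ) • 1, (2 * g * g : ℂ) • 1 - (2 * g : ℂ) • opA;
     (2 * g * g : ℂ) • 1 + (2 * g : ℂ) • opC, (Δ : ℂ) • 1]

/-! Since `𝒫² = 1` and `𝒫` anticommutes with `a` and `a†`, `J² = (𝒫 Q 𝒫) Q`, where `𝒫 Q 𝒫` is `Q`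
with the signs of `a` and `a†` flipped. Expanding this product entrywise, the only reordering
needed is `a a† = a†a + 1`, which produces the constant `4g²` in the upper diagonal entry. -/

theorem opP_mul_opP : opP * opP = 1 := by
  refine LinearMap.ext fun p => ?_
  simp [opP, ← comp_eq_aeval, comp_assoc]

theorem opP_mul_opA_mul_opP : opP * opA * opP = -opA := by
  refine LinearMap.ext fun p => ?_
  simp [opP, opA, ← comp_eq_aeval, derivative_comp, comp_assoc]

theorem opP_mul_opC_mul_opP : opP * opC * opP = -opC := by
  refine LinearMap.ext fun p => ?_
  simp [opP, opC, ← comp_eq_aeval, mul_comp, comp_assoc]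

theorem opA_mul_opC : opA * opC = opC * opA + 1 := by
  refine LinearMap.ext fun p => ?_
  simp [opA, opC, derivative_mul, add_comm]

theorem Matrix.scalar_mul_mul_scalar {n R : Type*} [Fintype n] [DecidableEq n] [Semiring R]
    (p : R) (M : Matrix n n R) :
    Matrix.scalar n p * M * Matrix.scalar n p = M.map (fun x => p * x * p) := by
  ext i j : 1
  simp [Matrix.scalar_apply, Matrix.diagonal_mul, Matrix.mul_diagonal]

theorem Pm_eq_scalar : Pm = Matrix.scalar (Fin 2) opP := by
  rw [Matrix.scalar_apply, Matrix.diagonal_fin_two, Pm]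

theorem Pm_mul_Q12_mul_Pm (g Δ : ℝ) :
    Pm * Q12 g Δ * Pm =
      !![(Δ : ℂ) • 1, (2 * g * g : ℂ) • 1 + (2 * g : ℂ) • opA;
         (2 * g * g : ℂ) • 1 - (2 * g : ℂ) • opC, (Δ : ℂ) • 1] := by
  rw [Pm_eq_scalar, Matrix.scalar_mul_mul_scalar, Q12]
  ext i j : 1
  fin_cases i <;> fin_cases j <;>
    simp [mul_add, mul_sub, add_mul, sub_mul, opP_mul_opP, opP_mul_opA_mul_opP,
      opP_mul_opC_mul_opP, ← sub_eq_add_neg, -Complex.coe_smul]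

/-- `J_{1/2}² = 4g² H^{1/2} + (4g⁴ + 2g² + Δ²) I`. -/
theorem J12_sq (g Δ : ℝ) :
    (Pm * Q12 g Δ) * (Pm * Q12 g Δ) =
      ((4 * g^2 : ℝ) : ℂ) • Hop g Δ (1/2) +
        ((4 * g^4 + 2 * g^2 + Δ^2 : ℝ) : ℂ) • (1 : M2) := by
  have hJJ : (Pm * Q12 g Δ) * (Pm * Q12 g Δ) = (Pm * Q12 g Δ * Pm) * Q12 g Δ := by
    simp only [mul_assoc]
  rw [hJJ, Pm_mul_Q12_mul_Pm, Q12, Matrix.mul_fin_two, Hop, Matrix.one_fin_two]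
  ext i j : 1
  fin_cases i <;> fin_cases j <;>
    simp only [Matrix.of_apply, Matrix.add_apply, Matrix.smul_apply, Matrix.cons_val',
      Matrix.cons_val_fin_one, mul_add, add_mul, mul_sub, sub_mul, smul_mul_assoc, mul_smul_comm,
      mul_one, one_mul, opA_mul_opC] <;>
    push_cast <;>
    module
end

section
/- Suppose $\epsilon$ is a real number with $2\epsilon \notin \mathbb{Z}$, and suppose $\alpha, \beta, \gamma, \delta$ are elements of the Weyl algebra (noncommutative polynomials in $a, a^\dagger$ with $[a,a^\dagger]=1$) such that the matrix $Q = \begin{pmatrix}\alpha & \beta \\ \gamma & \delta\end{pmatrix}$ satisfies $\tilde{H}^\epsilon Q = Q H^\epsilon$. Then $Q = 0$. -/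
open Polynomial

noncomputable section

/-- The Weyl algebra `ℂ[a, a†]`, realized as the subalgebra of operators on
`ℂ[x]` generated by `a = d/dx` and `a† = x·` (so `[a, a†] = 1`). -/
def WeylAlg : Subalgebra ℂ E := Algebra.adjoin ℂ {opA, opC}

/-- Elements of the Weyl algebra of degree at most `d`: the span of the
normally ordered monomials `aᵖ(a†)^q` with `p + q ≤ d`. -/
def weylDegLE (d : ℕ) : Submodule ℂ E :=
  Submodule.span ℂ {T : E | ∃ p q : ℕ, p + q ≤ d ∧ T = opA ^ p * opC ^ q}

/-- Elements of the Weyl algebra of degree strictly less than `ℓ`. -/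
def weylDegLT (ℓ : ℕ) : Submodule ℂ E :=
  Submodule.span ℂ {T : E | ∃ p q : ℕ, p + q < ℓ ∧ T = opA ^ p * opC ^ q}

end

/-!
Let `D i j = (ad a)^i (ad a†)^j`. These operators commute, and an element of the Weyl algebra has
degree `< ℓ` exactly when every `D i j` with `i + j ≥ ℓ` kills it. Suppose all entries of `Q`
have degree `≤ ℓ`. Applying `D (i+1) j`, `i + j = ℓ`, to a diagonal equation kills everything
except the lower-order terms produced by the anticommutator with `a + a†`; as `g ≠ 0` this gives
`(i+1) D i j α = j D (i+1) (j-1) α`, and starting from `j = 0` every degree-`ℓ` part `D i j α`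
vanishes, and likewise for `δ`. Applying `D i j` to an off-diagonal equation, where `D i j β`
commutes with `a` and `a†` and `ad (a†a)` acts on it as `i - j`, leaves `(i - j + 2ε) D i j β = 0`
(and `(i - j - 2ε) D i j γ = 0`); since `2ε ∉ ℤ`, the degree-`ℓ` parts of `β, γ` vanish too.
Descending induction on `ℓ` gives `Q = 0`.
-/

open LieAlgebra

attribute [local instance 100] LieRing.ofAssociativeRing

section Commutator

variable {R : Type*} [Ring R]

theorem mul_lie (x y z : R) : ⁅x * y, z⁆ = x * ⁅y, z⁆ + ⁅x, z⁆ * y := by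
  simp only [Ring.lie_def]; noncomm_ring

theorem lie_mul (x y z : R) : ⁅x, y * z⁆ = ⁅x, y⁆ * z + y * ⁅x, z⁆ := by
  simp only [Ring.lie_def]; noncomm_ring

theorem nsmul_mul_pow_sub_one {S : Type*} [Semiring S] (n : ℕ) (x : S) :
    n • (x * x ^ (n - 1)) = n • x ^ n := by
  rcases n with _ | n <;> simp [pow_succ']

theorem lie_pow_left_of_commute {x y z : R} (hz : Commute x z) (h : ⁅x, y⁆ = z) (n : ℕ) :
    ⁅x ^ n, y⁆ = n • (z * x ^ (n - 1)) := by
  induction n with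
  | zero => simp [Ring.lie_def]
  | succ n ih =>
    rw [pow_succ', mul_lie, ih, h, Nat.add_sub_cancel]
    rcases n with _ | n
    · simp
    · rw [Nat.add_sub_cancel, mul_smul_comm, ← mul_assoc, hz.eq, mul_assoc, ← pow_succ',
        ← succ_nsmul]

end Commutator

section Adjoint

variable {K A : Type*} [CommRing K] [Ring A] [Algebra K A]

theorem ad_pow_mul_eq_zero {x S T : A} {m n : ℕ} (hS : (ad K A x ^ m) S = 0)
    (hT : (ad K A x ^ n) T = 0) : (ad K A x ^ (m + n)) (S * T) = 0 := by
  induction m generalizing S n T with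
  | zero => simp_all
  | succ m ihm =>
    induction n generalizing T with
    | zero => simp_all
    | succ n ihn =>
      have hS' : (ad K A x ^ m) ⁅x, S⁆ = 0 := by rwa [pow_succ] at hS
      have hT' : (ad K A x ^ n) ⁅x, T⁆ = 0 := by rwa [pow_succ] at hT
      rw [show m + 1 + (n + 1) = m + 1 + n + 1 by omega, pow_succ, Module.End.mul_apply,
        ad_apply, lie_mul, map_add, ihn hT', add_zero, show m + 1 + n = m + (n + 1) by omega,
        ihm hS' hT]

variable (K) in
def adLocallyNilpotent (x : A) : Subalgebra K A where
  carrier := {T | ∃ n, (ad K A x ^ n) T = 0}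
  mul_mem' := by
    rintro S T ⟨m, hS⟩ ⟨n, hT⟩
    exact ⟨m + n, ad_pow_mul_eq_zero hS hT⟩
  add_mem' := by
    rintro S T ⟨m, hS⟩ ⟨n, hT⟩
    refine ⟨m + n, ?_⟩
    rw [map_add, Module.End.pow_map_zero_of_le (Nat.le_add_right m n) hS,
      Module.End.pow_map_zero_of_le (Nat.le_add_left n m) hT, add_zero]
  algebraMap_mem' r := ⟨1, by simp [Ring.lie_def, Algebra.commutes]⟩

theorem ad_one : ad K A 1 = 0 := by
  ext T; simp [Ring.lie_def]

theorem lie_ad_mulLeft (x y : A) :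
    ⁅ad K A x, LinearMap.mulLeft K y⁆ = LinearMap.mulLeft K ⁅x, y⁆ := by
  ext T
  simp only [Ring.lie_def, Module.End.mul_apply, LinearMap.sub_apply, ad_apply,
    LinearMap.mulLeft_apply]
  noncomm_ring

end Adjoint

section WeylPair

variable (K : Type*) {A : Type*} [CommRing K] [Ring A] [Algebra K A]

def weylDiff (a c : A) (i j : ℕ) : Module.End K A := ad K A a ^ i * ad K A c ^ j

/-- For a Weyl pair `⁅a, c⁆ = 1` this is the degree filtration: `ad a` and `ad c` act on normally
ordered symbols as `∂/∂c` and `-∂/∂a`. -/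
def adDegLT (a c : A) (ℓ : ℕ) : Submodule K A :=
  ⨅ (i : ℕ) (j : ℕ) (_ : ℓ ≤ i + j), LinearMap.ker (weylDiff K a c i j)

variable {K} {a c : A}

theorem mem_adDegLT {T : A} {ℓ : ℕ} :
    T ∈ adDegLT K a c ℓ ↔ ∀ i j, ℓ ≤ i + j → weylDiff K a c i j T = 0 := by
  simp [adDegLT]

theorem adDegLT_mono (a c : A) : Monotone (adDegLT K a c) := fun _ _ hle _ hT =>
  mem_adDegLT.2 fun i j hij => mem_adDegLT.1 hT i j (hle.trans hij)

theorem eq_zero_of_mem_adDegLT_zero {T : A} (hT : T ∈ adDegLT K a c 0) : T = 0 :=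
  mem_adDegLT.1 hT 0 0 le_rfl

theorem commute_ad_of_lie_eq_one (hac : ⁅a, c⁆ = 1) : Commute (ad K A a) (ad K A c) := by
  rw [commute_iff_lie_eq, ← LieHom.map_lie, hac, ad_one]

theorem lie_weylDiff_ad_left (i j : ℕ) (T : A) :
    ⁅a, weylDiff K a c i j T⁆ = weylDiff K a c (i + 1) j T := by
  simp only [weylDiff, pow_succ', mul_assoc, Module.End.mul_apply, ad_apply]

theorem lie_weylDiff_ad_right (hac : ⁅a, c⁆ = 1) (i j : ℕ) (T : A) :
    ⁅c, weylDiff K a c i j T⁆ = weylDiff K a c i (j + 1) T := by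
  rw [weylDiff, weylDiff, pow_succ', ← mul_assoc, ((commute_ad_of_lie_eq_one hac).pow_left i).eq,
    mul_assoc]
  rfl

theorem commute_weylDiff_ad_add (hac : ⁅a, c⁆ = 1) (i j : ℕ) :
    Commute (weylDiff K a c i j) (ad K A (a + c)) := by
  have ha : Commute (ad K A a) (ad K A (a + c)) := by
    rw [commute_iff_lie_eq, ← LieHom.map_lie, lie_add, lie_self, zero_add, hac, ad_one]
  have hc : Commute (ad K A c) (ad K A (a + c)) := by
    rw [commute_iff_lie_eq, ← LieHom.map_lie, lie_add, lie_self, add_zero, ← lie_skew, hac,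
      map_neg, ad_one, neg_zero]
  exact (ha.pow_left i).mul_left (hc.pow_left j)

theorem weylDiff_lie_add (hac : ⁅a, c⁆ = 1) (i j : ℕ) (T : A) :
    weylDiff K a c i j ⁅a + c, T⁆ = ⁅a + c, weylDiff K a c i j T⁆ :=
  LinearMap.congr_fun (commute_weylDiff_ad_add hac i j).eq T

theorem weylDiff_lie_number (hac : ⁅a, c⁆ = 1) (i j : ℕ) (T : A) :
    weylDiff K a c i j ⁅c * a, T⁆ =
      ⁅c * a, weylDiff K a c i j T⁆ + ((i : K) - j) • weylDiff K a c i j T := by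
  have ha : ⁅ad K A a, ad K A (c * a)⁆ = ad K A a := by
    rw [← LieHom.map_lie, lie_mul, hac, lie_self, one_mul, mul_zero, add_zero]
  have hc : ⁅ad K A c, ad K A (c * a)⁆ = -ad K A c := by
    rw [← LieHom.map_lie, lie_mul, lie_self, zero_mul, zero_add, ← lie_skew, hac, mul_neg,
      mul_one, map_neg]
  have key : ⁅weylDiff K a c i j, ad K A (c * a)⁆ = ((i : K) - j) • weylDiff K a c i j := by
    rw [weylDiff, mul_lie, lie_pow_left_of_commute (Commute.refl _) ha,
      lie_pow_left_of_commute (Commute.refl _).neg_right hc, neg_mul, smul_neg,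
      nsmul_mul_pow_sub_one, nsmul_mul_pow_sub_one]
    simp only [mul_neg, mul_smul_comm, smul_mul_assoc]
    module
  rw [Ring.lie_def, sub_eq_iff_eq_add] at key
  simpa only [Module.End.mul_apply, LinearMap.add_apply, LinearMap.smul_apply, ad_apply,
    add_comm] using LinearMap.congr_fun key T

theorem weylDiff_mul_left (hac : ⁅a, c⁆ = 1) (i j : ℕ) (T : A) :
    weylDiff K a c i j ((a + c) * T) = (a + c) * weylDiff K a c i j T
      + (i : K) • weylDiff K a c (i - 1) j T - (j : K) • weylDiff K a c i (j - 1) T := by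
  have ha : ⁅ad K A a, LinearMap.mulLeft K (a + c)⁆ = 1 := by
    rw [lie_ad_mulLeft, lie_add, lie_self, zero_add, hac]
    ext; simp
  have hc : ⁅ad K A c, LinearMap.mulLeft K (a + c)⁆ = -1 := by
    rw [lie_ad_mulLeft, lie_add, lie_self, add_zero, ← lie_skew, hac]
    ext; simp
  have key : ⁅weylDiff K a c i j, LinearMap.mulLeft K (a + c)⁆ =
      (i : K) • weylDiff K a c (i - 1) j - (j : K) • weylDiff K a c i (j - 1) := by
    rw [weylDiff, mul_lie, lie_pow_left_of_commute (Commute.one_right _) ha,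
      lie_pow_left_of_commute (Commute.neg_one_right _) hc]
    simp only [weylDiff, one_mul, neg_one_mul, mul_neg, smul_neg, mul_smul_comm, smul_mul_assoc]
    module
  rw [Ring.lie_def, sub_eq_iff_eq_add] at key
  simpa only [Module.End.mul_apply, LinearMap.add_apply, LinearMap.sub_apply,
    LinearMap.smul_apply, LinearMap.mulLeft_apply, add_comm, add_sub_assoc]
    using LinearMap.congr_fun key T

theorem weylDiff_mul_right (hac : ⁅a, c⁆ = 1) (i j : ℕ) (T : A) :
    weylDiff K a c i j (T * (a + c)) = weylDiff K a c i j T * (a + c)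
      + (i : K) • weylDiff K a c (i - 1) j T - (j : K) • weylDiff K a c i (j - 1) T := by
  have hT : T * (a + c) = (a + c) * T - ⁅a + c, T⁆ := by rw [Ring.lie_def, sub_sub_cancel]
  rw [hT, map_sub, weylDiff_mul_left hac, weylDiff_lie_add hac, Ring.lie_def]
  abel

theorem mem_adDegLT_of_ad_pow_eq_zero (hac : ⁅a, c⁆ = 1) {T : A} {m n : ℕ}
    (hm : (ad K A a ^ m) T = 0) (hn : (ad K A c ^ n) T = 0) : T ∈ adDegLT K a c (m + n) := by
  refine mem_adDegLT.2 fun i j hij => ?_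
  rcases le_or_gt m i with hi | hi
  · rw [weylDiff, ((commute_ad_of_lie_eq_one hac).pow_pow i j).eq, Module.End.mul_apply,
      Module.End.pow_map_zero_of_le hi hm, map_zero]
  · rw [weylDiff, Module.End.mul_apply, Module.End.pow_map_zero_of_le (by omega) hn, map_zero]

theorem adjoin_le_adLocallyNilpotent (hac : ⁅a, c⁆ = 1) :
    Algebra.adjoin K {a, c} ≤ adLocallyNilpotent K a ⊓ adLocallyNilpotent K c := by
  have hca : ⁅c, a⁆ = -1 := by rw [← lie_skew, hac]
  rw [Algebra.adjoin_le_iff]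
  rintro x (rfl | rfl | _)
  · exact ⟨⟨1, by simp⟩, ⟨2, by simp [pow_two, hca, Ring.lie_def]⟩⟩
  · exact ⟨⟨2, by simp [pow_two, hac, Ring.lie_def]⟩, ⟨1, by simp⟩⟩

theorem exists_mem_adDegLT_of_mem_adjoin (hac : ⁅a, c⁆ = 1) {T : A}
    (hT : T ∈ Algebra.adjoin K {a, c}) : ∃ ℓ, T ∈ adDegLT K a c ℓ := by
  obtain ⟨⟨m, hm⟩, ⟨n, hn⟩⟩ := adjoin_le_adLocallyNilpotent hac hT
  exact ⟨m + n, mem_adDegLT_of_ad_pow_eq_zero hac hm hn⟩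

end WeylPair

section Descent

variable {K A : Type*} [Field K] [Ring A] [Algebra K A] {a c : A} {ℓ : ℕ} {T : A}

theorem mem_adDegLT_of_anticommutator_mem [CharZero K] (hac : ⁅a, c⁆ = 1) {g : K} (hg : g ≠ 0)
    (hT : T ∈ adDegLT K a c (ℓ + 1))
    (h : ⁅c * a, T⁆ - g • ((a + c) * T + T * (a + c)) ∈ adDegLT K a c (ℓ + 1)) :
    T ∈ adDegLT K a c ℓ := by
  have top := mem_adDegLT.1 hT
  have rel : ∀ i j, i + j = ℓ → ((i : K) + 1) • weylDiff K a c i j T =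
      (j : K) • weylDiff K a c (i + 1) (j - 1) T := by
    intro i j hij
    have hD := mem_adDegLT.1 h (i + 1) j (by omega)
    rw [map_sub, map_smul, map_add, weylDiff_lie_number hac, weylDiff_mul_left hac,
      weylDiff_mul_right hac, top (i + 1) j (by omega), Nat.add_sub_cancel] at hD
    simp only [lie_zero, mul_zero, zero_mul, smul_zero, zero_add, Nat.cast_add, Nat.cast_one] at hD
    have hrel : (2 * g) • (((i : K) + 1) • weylDiff K a c i j T -
        (j : K) • weylDiff K a c (i + 1) (j - 1) T) = 0 := by
      linear_combination (norm := module) -hD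
    exact sub_eq_zero.1 ((smul_eq_zero.1 hrel).resolve_left (mul_ne_zero two_ne_zero hg))
  have level : ∀ j i, i + j = ℓ → weylDiff K a c i j T = 0 := by
    intro j
    induction j with
    | zero =>
      intro i hi
      simpa [Nat.cast_add_one_ne_zero] using rel i 0 hi
    | succ j ih =>
      intro i hi
      simpa [Nat.cast_add_one_ne_zero, ih (i + 1) (by omega)] using rel i (j + 1) hi
  refine mem_adDegLT.2 fun i j hij => ?_
  rcases hij.lt_or_eq with hlt | heq
  · exact top i j hlt
  · exact level j i heq.symm

theorem mem_adDegLT_of_commutator_mem (hac : ⁅a, c⁆ = 1) {g s : K} (hs : ∀ n : ℤ, s ≠ n)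
    (hT : T ∈ adDegLT K a c (ℓ + 1))
    (h : ⁅c * a, T⁆ - g • ⁅a + c, T⁆ + s • T ∈ adDegLT K a c ℓ) :
    T ∈ adDegLT K a c ℓ := by
  refine mem_adDegLT.2 fun i j hij => ?_
  rcases hij.lt_or_eq with hlt | heq
  · exact mem_adDegLT.1 hT i j hlt
  have ha : ⁅a, weylDiff K a c i j T⁆ = 0 := by
    rw [lie_weylDiff_ad_left]; exact mem_adDegLT.1 hT _ _ (by omega)
  have hc : ⁅c, weylDiff K a c i j T⁆ = 0 := by
    rw [lie_weylDiff_ad_right hac]; exact mem_adDegLT.1 hT _ _ (by omega)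
  have hD := mem_adDegLT.1 h i j heq.le
  rw [map_add, map_sub, map_smul, map_smul, weylDiff_lie_number hac, weylDiff_lie_add hac,
    mul_lie, add_lie, ha, hc, mul_zero, zero_mul, add_zero, smul_zero, zero_add, sub_zero,
    ← add_smul] at hD
  refine (smul_eq_zero.1 hD).resolve_left fun h0 => hs ((j : ℤ) - i) ?_
  push_cast
  linear_combination h0

end Descent

/-- The four entries of `H̃^ε Q = Q H^ε` for `Q = !![α, β; γ, δ]`, written with `N = a†a = c * a`
and `X = a + a† = a + c`. -/
structure IsRabiIntertwiner {K A : Type*} [CommRing K] [Ring A] [Algebra K A]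
    (a c : A) (g Δ ε : K) (α β γ δ : A) : Prop where
  eq_zero_zero : ⁅c * a, α⁆ - g • ((a + c) * α + α * (a + c)) = Δ • (β - γ)
  eq_zero_one : ⁅c * a, β⁆ - g • ⁅a + c, β⁆ + (2 * ε) • β = Δ • (α - δ)
  eq_one_zero : ⁅c * a, γ⁆ + g • ⁅a + c, γ⁆ - (2 * ε) • γ = Δ • (δ - α)
  eq_one_one : ⁅c * a, δ⁆ + g • ((a + c) * δ + δ * (a + c)) = Δ • (γ - β)

theorem IsRabiIntertwiner.eq_zero {K A : Type*} [Field K] [CharZero K] [Ring A] [Algebra K A]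
    {a c : A} {g Δ ε : K} {α β γ δ : A}
    (h : IsRabiIntertwiner a c g Δ ε α β γ δ) (hac : ⁅a, c⁆ = 1) (hg : g ≠ 0)
    (hε : ∀ n : ℤ, 2 * ε ≠ n) (hα : α ∈ Algebra.adjoin K {a, c})
    (hβ : β ∈ Algebra.adjoin K {a, c}) (hγ : γ ∈ Algebra.adjoin K {a, c})
    (hδ : δ ∈ Algebra.adjoin K {a, c}) : α = 0 ∧ β = 0 ∧ γ = 0 ∧ δ = 0 := by
  let P ℓ := α ∈ adDegLT K a c ℓ ∧ β ∈ adDegLT K a c ℓ ∧ γ ∈ adDegLT K a c ℓ ∧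
    δ ∈ adDegLT K a c ℓ
  have step (ℓ : ℕ) : P (ℓ + 1) → P ℓ := by
    rintro ⟨hα, hβ, hγ, hδ⟩
    have hα' := mem_adDegLT_of_anticommutator_mem hac hg hα
      (h.eq_zero_zero ▸ Submodule.smul_mem _ Δ (sub_mem hβ hγ))
    have hδ' := mem_adDegLT_of_anticommutator_mem hac (neg_ne_zero.2 hg) hδ <| by
      rw [neg_smul, sub_neg_eq_add, h.eq_one_one]
      exact Submodule.smul_mem _ Δ (sub_mem hγ hβ)
    have hβ' := mem_adDegLT_of_commutator_mem hac hε hβ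
      (h.eq_zero_one ▸ Submodule.smul_mem _ Δ (sub_mem hα' hδ'))
    have hγ' := mem_adDegLT_of_commutator_mem hac (g := -g) (s := -(2 * ε))
      (fun n hn => hε (-n) (by push_cast; linear_combination -hn)) hγ <| by
      rw [neg_smul, sub_neg_eq_add, neg_smul, ← sub_eq_add_neg, h.eq_one_zero]
      exact Submodule.smul_mem _ Δ (sub_mem hδ' hα')
    exact ⟨hα', hβ', hγ', hδ'⟩
  have descend (ℓ : ℕ) : P ℓ → P 0 := by
    induction ℓ with
    | zero => exact id
    | succ ℓ ih => exact fun hP => ih (step ℓ hP)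
  obtain ⟨ℓ₁, h₁⟩ := exists_mem_adDegLT_of_mem_adjoin hac hα
  obtain ⟨ℓ₂, h₂⟩ := exists_mem_adDegLT_of_mem_adjoin hac hβ
  obtain ⟨ℓ₃, h₃⟩ := exists_mem_adDegLT_of_mem_adjoin hac hγ
  obtain ⟨ℓ₄, h₄⟩ := exists_mem_adDegLT_of_mem_adjoin hac hδ
  have hP : P (ℓ₁ + ℓ₂ + ℓ₃ + ℓ₄) := ⟨adDegLT_mono a c (by omega) h₁,
    adDegLT_mono a c (by omega) h₂, adDegLT_mono a c (by omega) h₃,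
    adDegLT_mono a c (by omega) h₄⟩
  obtain ⟨h₁, h₂, h₃, h₄⟩ := descend _ hP
  exact ⟨eq_zero_of_mem_adDegLT_zero h₁, eq_zero_of_mem_adDegLT_zero h₂,
    eq_zero_of_mem_adDegLT_zero h₃, eq_zero_of_mem_adDegLT_zero h₄⟩

theorem opA_lie_opC : ⁅opA, opC⁆ = 1 := by
  refine LinearMap.ext fun f => ?_
  simp [opA, opC, Ring.lie_def, derivative_mul]

theorem isRabiIntertwiner_of_hop_mul_eq {g Δ ε : ℝ} {α β γ δ : E}
    (hQ : Hop (-g) Δ ε * !![α, β; γ, δ] = !![α, β; γ, δ] * Hop g Δ ε) :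
    IsRabiIntertwiner opA opC (g : ℂ) Δ ε α β γ δ := by
  simp only [Hop, Matrix.mul_fin_two, Complex.ofReal_neg, ← Matrix.ext_iff, Fin.forall_fin_two,
    Matrix.of_apply, Matrix.cons_val_zero, Matrix.cons_val_one] at hQ
  obtain ⟨⟨e00, e01⟩, e10, e11⟩ := hQ
  simp only [add_mul, mul_add, sub_mul, mul_sub, smul_mul_assoc, mul_smul_comm, one_mul,
    mul_one] at e00 e01 e10 e11
  constructor <;> simp only [Ring.lie_def, add_mul, mul_add, smul_sub, smul_add]
  · linear_combination (norm := module) e00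
  · linear_combination (norm := module) e01
  · linear_combination (norm := module) e10
  · linear_combination (norm := module) e11

/-- if `2ε ∉ ℤ` (and `g ≠ 0`), the only matrix `Q` with entries
in the Weyl algebra satisfying `H̃^ε Q = Q H^ε` is `Q = 0`. -/
theorem no_solution_nonhalfinteger (g Δ ε : ℝ) (hg : g ≠ 0)
    (hε : ∀ n : ℤ, (2 * ε : ℝ) ≠ (n : ℝ))
    (α β γ δ : E) (hα : α ∈ WeylAlg) (hβ : β ∈ WeylAlg)
    (hγ : γ ∈ WeylAlg) (hδ : δ ∈ WeylAlg)
    (hQ : Hop (-g) Δ ε * !![α, β; γ, δ] = !![α, β; γ, δ] * Hop g Δ ε) :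
    (!![α, β; γ, δ] : M2) = 0 := by
  obtain ⟨rfl, rfl, rfl, rfl⟩ := (isRabiIntertwiner_of_hop_mul_eq hQ).eq_zero opA_lie_opC
    (by exact_mod_cast hg) (fun n h => hε n (by exact_mod_cast h)) hα hβ hγ hδ
  ext i j
  fin_cases i <;> fin_cases j <;> rfl
end

section
/- Let $\epsilon \in \frac12\mathbb{Z}$ with $\ell = 2|\epsilon|$, and suppose $Q \in \mathrm{Mat}_2(\mathbb{C}[a,a^\dagger])$ is a nonzero solution of $\tilde{H}^\epsilon Q = Q H^\epsilon$ all of whose entries have degree at most $n$. Then $n \geq \ell$. In particular for $\epsilon = 1$, any nonzero polynomial solution has at least one entry of degree $\geq 2$. -/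
open Polynomial

noncomputable section AuxWeyl

namespace WeylAux

/-- falling-factorial polynomial: `eval N (ff p q) = (N+q)(N+q-1)⋯(N+q-p+1)`. -/
def ff (p q : ℕ) : Polynomial ℂ := ∏ i ∈ Finset.range p, (X + C ((q : ℂ) - (i : ℂ)))

lemma ff_succ (p q : ℕ) : ff (p+1) q = ff p q * (X + C ((q : ℂ) - (p : ℂ))) := by
  simp [ff, Finset.prod_range_succ]

lemma monic_ff (p q : ℕ) : (ff p q).Monic := by
  apply monic_prod_of_monic
  intro i _
  exact monic_X_add_C _

lemma natDegree_ff (p q : ℕ) : (ff p q).natDegree = p := by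
  rw [ff, natDegree_prod_of_monic _ _ (fun i _ => monic_X_add_C _)]
  simp only [natDegree_X_add_C]
  simp

lemma eval_ff_zero (p q N : ℕ) (h : N + q < p) : eval (N : ℂ) (ff p q) = 0 := by
  rw [ff, eval_prod]
  apply Finset.prod_eq_zero (Finset.mem_range.mpr h : N + q ∈ Finset.range p)
  push_cast
  ring_nf
  simp

lemma opC_pow_apply (q : ℕ) (f : Polynomial ℂ) : (opC ^ q) f = X ^ q * f := by
  rw [opC, LinearMap.pow_mulLeft]
  rfl

lemma Mn_apply (p q N : ℕ) :
    (opA ^ p * opC ^ q) ((X : Polynomial ℂ) ^ N) = eval (N : ℂ) (ff p q) • X ^ (N + q - p) := by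
  induction p with
  | zero =>
    simp [ff, opC_pow_apply, ← pow_add, add_comm]
  | succ p ih =>
    have h1 : opA ^ (p+1) * opC ^ q = opA * (opA ^ p * opC ^ q) := by
      rw [pow_succ', mul_assoc]
    rw [h1, Module.End.mul_apply, ih]
    show derivative _ = _
    rw [derivative_smul, derivative_X_pow]
    rcases lt_or_ge p (N + q) with h | h
    · have hc : ((N + q - p : ℕ) : ℂ) = (N : ℂ) + q - p := by
        push_cast [Nat.cast_sub h.le]
        ring
      have he : N + q - p - 1 = N + q - (p + 1) := by omega
      rw [ff_succ, eval_mul, he, hc]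
      simp only [eval_add, eval_sub, eval_X, eval_C, smul_eq_C_mul, map_mul, map_add, map_sub]
      ring
    · rcases eq_or_lt_of_le h with h' | h'
      · have h0 : N + q - p = 0 := by omega
        have hz : eval (N:ℂ) (ff (p+1) q) = 0 := by
          rw [ff_succ, eval_mul]
          simp only [eval_add, eval_X, eval_C]
          have : (N:ℂ) + ((q:ℂ) - p) = 0 := by rw [← h']; push_cast; ring
          rw [this, mul_zero]
        rw [h0, hz]
        simp
      · simp [eval_ff_zero p q N h', eval_ff_zero (p+1) q N (by omega)]

/-- The index rectangle. -/
def Rn (n : ℕ) : Finset (ℕ × ℕ) := Finset.range (n+1) ×ˢ Finset.range (n+1)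

/-- An element of the Weyl algebra with coordinates `c` in the normally
ordered monomial basis. -/
def rep (n : ℕ) (c : ℕ × ℕ → ℂ) : E := ∑ pq ∈ Rn n, c pq • (opA ^ pq.1 * opC ^ pq.2)

/-- The slice polynomial of shift `d`: `eval N (Pd n c d)` is the coefficient
of `x^(N+d)` in `(rep n c)(x^N)`. -/
def Pd (n : ℕ) (c : ℕ × ℕ → ℂ) (d : ℤ) : Polynomial ℂ :=
  ∑ pq ∈ Rn n, if (pq.2 : ℤ) - pq.1 = d then c pq • ff pq.1 pq.2 else 0

lemma exists_rep (n : ℕ) (T : E) (hT : T ∈ weylDegLE n) :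
    ∃ c : ℕ × ℕ → ℂ, (∀ pq : ℕ × ℕ, n < pq.1 + pq.2 → c pq = 0) ∧ T = rep n c := by
  induction hT using Submodule.span_induction with
  | mem x hx =>
    obtain ⟨p, q, hpq, rfl⟩ := hx
    classical
    refine ⟨fun pq => if pq = (p, q) then 1 else 0, ?_, ?_⟩
    · intro pq h
      dsimp only
      rw [if_neg]
      rintro rfl
      omega
    · symm
      rw [rep, Finset.sum_eq_single (p, q)]
      · simp
      · rintro pq _ hne
        rw [if_neg hne, zero_smul]
      · intro h
        exfalso
        apply h
        simp only [Rn, Finset.mem_product, Finset.mem_range]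
        omega
  | zero =>
    exact ⟨0, fun _ _ => rfl, by simp [rep]⟩
  | add x y _ _ hx hy =>
    obtain ⟨c₁, hs₁, rfl⟩ := hx
    obtain ⟨c₂, hs₂, rfl⟩ := hy
    refine ⟨c₁ + c₂, fun pq h => by simp [hs₁ pq h, hs₂ pq h], ?_⟩
    simp [rep, add_smul, Finset.sum_add_distrib]
  | smul a x _ hx =>
    obtain ⟨c, hs, rfl⟩ := hx
    refine ⟨a • c, fun pq h => by simp [hs pq h], ?_⟩
    simp [rep, Finset.smul_sum, smul_smul]

lemma key1 (n : ℕ) (c : ℕ × ℕ → ℂ) (d : ℤ) (N j : ℕ) (hN : n ≤ N) (hj : (j : ℤ) = N + d) :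
    ((rep n c) ((X : Polynomial ℂ) ^ N)).coeff j = eval (N : ℂ) (Pd n c d) := by
  rw [rep, Pd]
  simp only [LinearMap.sum_apply, LinearMap.smul_apply, Mn_apply, finset_sum_coeff,
    eval_finset_sum]
  apply Finset.sum_congr rfl
  rintro ⟨p, q⟩ hpq
  simp only [Rn, Finset.mem_product, Finset.mem_range] at hpq
  rw [coeff_smul, coeff_smul, coeff_X_pow]
  by_cases hd : (q : ℤ) - p = d
  · rw [if_pos hd, if_pos (by omega : j = N + q - p)]
    simp [smul_eq_mul]
  · rw [if_neg hd, if_neg (by omega : ¬ j = N + q - p)]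
    simp

variable {n m : ℕ} {c : ℕ × ℕ → ℂ}

lemma coeff_Pd_eq_zero (hsupp : ∀ pq : ℕ × ℕ, m < pq.1 + pq.2 → c pq = 0)
    (t : ℕ) (d : ℤ) (h : (m : ℤ) < 2 * t + d) : (Pd n c d).coeff t = 0 := by
  rw [Pd, finset_sum_coeff]
  apply Finset.sum_eq_zero
  rintro ⟨p, q⟩ hpq
  by_cases hd : (q : ℤ) - p = d
  · rw [if_pos hd, coeff_smul]
    rcases lt_or_ge p t with hp | hp
    · rw [coeff_eq_zero_of_natDegree_lt (by rw [natDegree_ff]; omega), smul_zero]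
    · rw [hsupp (p, q) (by simp only; omega), zero_smul]
  · rw [if_neg hd, coeff_zero]

lemma coeff_Pd_top' (hsupp : ∀ pq : ℕ × ℕ, m < pq.1 + pq.2 → c pq = 0)
    (p₀ q₀ : ℕ) (hm : p₀ + q₀ = m) (hn : m ≤ n) (d : ℤ) (hd : d = (q₀ : ℤ) - p₀) :
    (Pd n c d).coeff p₀ = c (p₀, q₀) := by
  subst hd
  rw [Pd, finset_sum_coeff]
  rw [Finset.sum_eq_single (p₀, q₀)]
  · have h1 : (ff p₀ q₀).coeff p₀ = 1 := by
      have := (monic_ff p₀ q₀).coeff_natDegree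
      rwa [natDegree_ff] at this
    rw [if_pos rfl, coeff_smul, h1, smul_eq_mul, mul_one]
  · rintro ⟨p, q⟩ hpq hne
    by_cases hd : (q : ℤ) - p = (q₀ : ℤ) - p₀
    · rw [if_pos hd, coeff_smul]
      rcases lt_trichotomy p p₀ with hp | hp | hp
      · rw [coeff_eq_zero_of_natDegree_lt (by rw [natDegree_ff]; omega), smul_zero]
      · exfalso; apply hne; ext <;> simp only <;> omega
      · rw [hsupp (p, q) (by simp only; omega), zero_smul]
    · rw [if_neg hd, coeff_zero]
  · intro h
    exfalso
    apply h
    simp only [Rn, Finset.mem_product, Finset.mem_range]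
    omega

lemma natDegree_Pd_le (hsupp : ∀ pq : ℕ × ℕ, m < pq.1 + pq.2 → c pq = 0)
    (t : ℕ) (d : ℤ) (h : (m : ℤ) < 2 * t + 2 + d) : (Pd n c d).natDegree ≤ t := by
  rw [natDegree_le_iff_coeff_eq_zero]
  intro s hs
  exact coeff_Pd_eq_zero hsupp s d (by omega)

lemma coeff_comp_linear (P : Polynomial ℂ) (a : ℂ) (t : ℕ) (h : P.natDegree ≤ t) :
    (P.comp (X + C a)).coeff t = P.coeff t := by
  by_cases hP : P = 0
  · simp [hP]
  rcases lt_or_eq_of_le h with h' | h'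
  · rw [coeff_eq_zero_of_natDegree_lt h', coeff_eq_zero_of_natDegree_lt]
    calc (P.comp (X + C a)).natDegree ≤ P.natDegree * (X + C a).natDegree :=
          natDegree_comp_le
      _ ≤ P.natDegree := by rw [natDegree_X_add_C]; omega
      _ < t := h'
  · have hd : (P.comp (X + C a)).natDegree = t := by
      rw [natDegree_comp, natDegree_X_add_C, mul_one, h']
    rw [← hd, coeff_natDegree, leadingCoeff_comp (by rw [natDegree_X_add_C]; omega)]
    rw [(monic_X_add_C a).leadingCoeff, one_pow, mul_one, leadingCoeff, hd, h']

lemma opA_apply (f : Polynomial ℂ) : opA f = derivative f := rfl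
lemma opC_apply (f : Polynomial ℂ) : opC f = X * f := rfl

lemma coeff_N_mul (T : E) (N j : ℕ) :
    ((opC * opA * T) ((X : Polynomial ℂ) ^ N)).coeff j = (j : ℂ) * ((T (X ^ N)).coeff j) := by
  rw [mul_assoc, Module.End.mul_apply, opC_apply, Module.End.mul_apply, opA_apply]
  cases j with
  | zero => simp [mul_coeff_zero]
  | succ j =>
    rw [coeff_X_mul, coeff_derivative]
    push_cast
    ring

lemma coeff_A_mul (T : E) (N j : ℕ) :
    ((opA * T) ((X : Polynomial ℂ) ^ N)).coeff j = ((j : ℂ) + 1) * ((T (X ^ N)).coeff (j + 1)) := by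
  rw [Module.End.mul_apply, opA_apply, coeff_derivative]
  ring_nf

lemma coeff_C_mul' (T : E) (N j : ℕ) :
    ((opC * T) ((X : Polynomial ℂ) ^ N)).coeff (j + 1) = (T (X ^ N)).coeff j := by
  rw [Module.End.mul_apply, opC_apply, coeff_X_mul]

lemma mul_N_apply (T : E) (N : ℕ) :
    (T * (opC * opA)) ((X : Polynomial ℂ) ^ N) = (N : ℂ) • T (X ^ N) := by
  rw [Module.End.mul_apply, Module.End.mul_apply, opA_apply, opC_apply]
  cases N with
  | zero => simp
  | succ N =>
    rw [derivative_X_pow, ← map_smul]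
    congr 1
    rw [Nat.add_sub_cancel, smul_eq_C_mul]
    push_cast
    ring

lemma mul_A_apply (T : E) (N : ℕ) :
    (T * opA) ((X : Polynomial ℂ) ^ (N + 1)) = ((N : ℂ) + 1) • T (X ^ N) := by
  rw [Module.End.mul_apply, opA_apply, derivative_X_pow, ← map_smul]
  congr 1
  rw [Nat.add_sub_cancel, smul_eq_C_mul]
  push_cast
  ring

lemma mul_C_apply (T : E) (N : ℕ) :
    (T * opC) ((X : Polynomial ℂ) ^ N) = T (X ^ (N + 1)) := by
  rw [Module.End.mul_apply, opC_apply, ← pow_succ']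

/-- The master lemma: a first-order intertwining-type operator equation for `u`
forces a family of polynomial identities among the slice polynomials `Pd`. -/
lemma master (n : ℕ) (a₁ a₂ b₁ b₂ Δc : ℂ) (u w₁ w₂ : E) (cu c₁ c₂ : ℕ × ℕ → ℂ)
    (hu : u = rep n cu) (h₁ : w₁ = rep n c₁) (h₂ : w₂ = rep n c₂)
    (heq : (opC * opA) * u + a₁ • (opA * u) + a₁ • (opC * u) + b₁ • u + Δc • w₁
         = u * (opC * opA) + a₂ • (u * opA) + a₂ • (u * opC) + b₂ • u + Δc • w₂)
    (d : ℤ) :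
    C ((d : ℂ) + b₁ - b₂) * Pd n cu d
      + a₁ • ((X + C ((d : ℂ) + 1)) * Pd n cu (d + 1) + Pd n cu (d - 1))
      - a₂ • (X * ((Pd n cu (d + 1)).comp (X + C (-1))) + (Pd n cu (d - 1)).comp (X + C 1))
    = Δc • (Pd n c₂ d - Pd n c₁ d) := by
  subst hu h₁ h₂
  rw [← sub_eq_zero]
  set G : Polynomial ℂ := C ((d : ℂ) + b₁ - b₂) * Pd n cu d
      + a₁ • ((X + C ((d : ℂ) + 1)) * Pd n cu (d + 1) + Pd n cu (d - 1))
      - a₂ • (X * ((Pd n cu (d + 1)).comp (X + C (-1))) + (Pd n cu (d - 1)).comp (X + C 1))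
      - Δc • (Pd n c₂ d - Pd n c₁ d) with hG
  have key : ∀ N' : ℕ, n + 1 + d.natAbs ≤ N' + 1 → eval ((N' : ℂ) + 1) G = 0 := by
    intro N' hN'
    have hn1 : n ≤ N' := by omega
    obtain ⟨j, hj⟩ : ∃ j : ℕ, (j : ℤ) = (N' : ℤ) + d := by
      refine ⟨((N' : ℤ) + d).toNat, Int.toNat_of_nonneg ?_⟩
      omega
    have h := congrArg (fun T : E => ((T ((X : Polynomial ℂ) ^ (N' + 1))).coeff (j + 1))) heq
    simp only [LinearMap.add_apply, LinearMap.smul_apply, coeff_add, coeff_smul,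
      smul_eq_mul, mul_N_apply, mul_A_apply, mul_C_apply, coeff_N_mul, coeff_A_mul,
      coeff_C_mul'] at h
    rw [key1 n cu d (N' + 1) (j + 1) (by omega) (by push_cast; omega),
        key1 n cu (d + 1) (N' + 1) (j + 1 + 1) (by omega) (by push_cast; omega),
        key1 n cu (d - 1) (N' + 1) j (by omega) (by push_cast; omega),
        key1 n cu (d + 1) N' (j + 1) (by omega) (by push_cast; omega),
        key1 n cu (d - 1) (N' + 2) (j + 1) (by omega) (by push_cast; omega),
        key1 n c₁ d (N' + 1) (j + 1) (by omega) (by push_cast; omega),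
        key1 n c₂ d (N' + 1) (j + 1) (by omega) (by push_cast; omega)] at h
    have hc : (j : ℂ) = (N' : ℂ) + (d : ℂ) := by exact_mod_cast congrArg (Int.cast : ℤ → ℂ) hj
    rw [hG]
    simp only [eval_add, eval_sub, eval_mul, eval_smul, eval_comp, eval_X, eval_C, smul_eq_mul]
    push_cast at h ⊢
    rw [hc] at h
    ring_nf at h ⊢
    linear_combination h
  have hzero : G = 0 := by
    apply Polynomial.eq_zero_of_infinite_isRoot
    apply Set.infinite_of_injective_forall_mem
      (f := fun i : ℕ => ((n + 1 + d.natAbs + i : ℕ) : ℂ))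
    · intro x y hxy
      simp only [Nat.cast_inj] at hxy
      omega
    · intro i
      show IsRoot G _
      have : ((n + 1 + d.natAbs + i : ℕ) : ℂ) = ((n + d.natAbs + i : ℕ) : ℂ) + 1 := by
        push_cast; ring
      rw [IsRoot.def, this]
      exact key (n + d.natAbs + i) (by omega)
  rw [hzero]

lemma extractA (hmn : m ≤ n) (a₁ a₂ b₁ b₂ Δc : ℂ) (cu c₁ c₂ : ℕ × ℕ → ℂ)
    (hsu : ∀ pq : ℕ × ℕ, m < pq.1 + pq.2 → cu pq = 0)
    (hs₁ : ∀ pq : ℕ × ℕ, m < pq.1 + pq.2 → c₁ pq = 0)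
    (hs₂ : ∀ pq : ℕ × ℕ, m < pq.1 + pq.2 → c₂ pq = 0)
    (ha : a₁ ≠ a₂)
    (hMI : ∀ d : ℤ, C ((d : ℂ) + b₁ - b₂) * Pd n cu d
      + a₁ • ((X + C ((d : ℂ) + 1)) * Pd n cu (d + 1) + Pd n cu (d - 1))
      - a₂ • (X * ((Pd n cu (d + 1)).comp (X + C (-1))) + (Pd n cu (d - 1)).comp (X + C 1))
      = Δc • (Pd n c₂ d - Pd n c₁ d)) :
    ∀ p₀ q₀ : ℕ, p₀ + q₀ = m → cu (p₀, q₀) = 0 := by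
  intro p₀
  induction p₀ with
  | zero =>
    intro q₀ hq₀
    have h := congrArg (fun P : Polynomial ℂ => P.coeff 0) (hMI ((m : ℤ) + 1))
    simp only [add_mul, coeff_add, coeff_sub, coeff_smul, coeff_C_mul, smul_eq_mul,
      mul_coeff_zero, coeff_X_zero, zero_mul, coeff_C_zero] at h
    rw [coeff_Pd_eq_zero hsu 0 ((m : ℤ) + 1) (by omega),
        coeff_Pd_eq_zero hsu 0 ((m : ℤ) + 1 + 1) (by omega),
        coeff_comp_linear _ _ _ (natDegree_Pd_le hsu 0 ((m : ℤ) + 1 - 1) (by omega)),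
        coeff_Pd_top' hsu 0 q₀ hq₀ hmn ((m : ℤ) + 1 - 1) (by push_cast; omega),
        coeff_Pd_eq_zero hs₁ 0 ((m : ℤ) + 1) (by omega),
        coeff_Pd_eq_zero hs₂ 0 ((m : ℤ) + 1) (by omega)] at h
    have h' : (a₁ - a₂) * cu (0, q₀) = 0 := by linear_combination h
    rcases mul_eq_zero.mp h' with h'' | h''
    · exact absurd (sub_eq_zero.mp h'') ha
    · exact h''
  | succ t ih =>
    intro q₀ hq₀
    have h := congrArg (fun P : Polynomial ℂ => P.coeff (t + 1)) (hMI ((m : ℤ) - 1 - 2 * t))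
    simp only [add_mul, coeff_add, coeff_sub, coeff_smul, coeff_C_mul, smul_eq_mul,
      coeff_X_mul] at h
    rw [coeff_Pd_eq_zero hsu (t+1) ((m : ℤ) - 1 - 2 * t) (by omega),
        coeff_Pd_eq_zero hsu (t+1) ((m : ℤ) - 1 - 2 * t + 1) (by omega),
        coeff_comp_linear _ _ _ (natDegree_Pd_le hsu t ((m : ℤ) - 1 - 2 * t + 1) (by omega)),
        coeff_comp_linear _ _ _ (natDegree_Pd_le hsu (t+1) ((m : ℤ) - 1 - 2 * t - 1) (by omega)),
        coeff_Pd_top' hsu t (m - t) (by omega) hmn ((m : ℤ) - 1 - 2 * t + 1) (by push_cast; omega),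
        coeff_Pd_top' hsu (t+1) q₀ hq₀ hmn ((m : ℤ) - 1 - 2 * t - 1) (by push_cast; omega),
        coeff_Pd_eq_zero hs₁ (t+1) ((m : ℤ) - 1 - 2 * t) (by omega),
        coeff_Pd_eq_zero hs₂ (t+1) ((m : ℤ) - 1 - 2 * t) (by omega),
        ih (m - t) (by omega)] at h
    have h' : (a₁ - a₂) * cu (t + 1, q₀) = 0 := by linear_combination h
    rcases mul_eq_zero.mp h' with h'' | h''
    · exact absurd (sub_eq_zero.mp h'') ha
    · exact h''

lemma extractB (hmn : m ≤ n) (a₁ a₂ b₁ b₂ Δc : ℂ) (cu c₁ c₂ : ℕ × ℕ → ℂ)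
    (hsu : ∀ pq : ℕ × ℕ, m < pq.1 + pq.2 → cu pq = 0)
    (hs₁ : ∀ pq : ℕ × ℕ, m < pq.1 + pq.2 → c₁ pq = 0)
    (hs₂ : ∀ pq : ℕ × ℕ, m < pq.1 + pq.2 → c₂ pq = 0)
    (ha : a₁ = a₂)
    (hMI : ∀ d : ℤ, C ((d : ℂ) + b₁ - b₂) * Pd n cu d
      + a₁ • ((X + C ((d : ℂ) + 1)) * Pd n cu (d + 1) + Pd n cu (d - 1))
      - a₂ • (X * ((Pd n cu (d + 1)).comp (X + C (-1))) + (Pd n cu (d - 1)).comp (X + C 1))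
      = Δc • (Pd n c₂ d - Pd n c₁ d)) :
    ∀ p₀ q₀ : ℕ, p₀ + q₀ = m →
      (((m : ℂ) - 2 * p₀) + b₁ - b₂) * cu (p₀, q₀) = Δc * (c₂ (p₀, q₀) - c₁ (p₀, q₀)) := by
  intro p₀
  cases p₀ with
  | zero =>
    intro q₀ hq₀
    have h := congrArg (fun P : Polynomial ℂ => P.coeff 0) (hMI ((m : ℤ)))
    simp only [add_mul, coeff_add, coeff_sub, coeff_smul, coeff_C_mul, smul_eq_mul,
      mul_coeff_zero, coeff_X_zero, zero_mul, coeff_C_zero] at h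
    rw [coeff_Pd_top' hsu 0 q₀ hq₀ hmn ((m : ℤ)) (by push_cast; omega),
        coeff_Pd_eq_zero hsu 0 ((m : ℤ) + 1) (by omega),
        coeff_comp_linear _ _ _ (natDegree_Pd_le hsu 0 ((m : ℤ) - 1) (by omega)),
        coeff_Pd_top' hs₁ 0 q₀ hq₀ hmn ((m : ℤ)) (by push_cast; omega),
        coeff_Pd_top' hs₂ 0 q₀ hq₀ hmn ((m : ℤ)) (by push_cast; omega)] at h
    push_cast at h ⊢
    linear_combination h - (Pd n cu ((m : ℤ) - 1)).coeff 0 * ha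
  | succ t =>
    intro q₀ hq₀
    have h := congrArg (fun P : Polynomial ℂ => P.coeff (t + 1)) (hMI ((m : ℤ) - 2 * t - 2))
    simp only [add_mul, coeff_add, coeff_sub, coeff_smul, coeff_C_mul, smul_eq_mul,
      coeff_X_mul] at h
    rw [coeff_Pd_top' hsu (t+1) q₀ hq₀ hmn ((m : ℤ) - 2 * t - 2) (by push_cast; omega),
        coeff_Pd_eq_zero hsu (t+1) ((m : ℤ) - 2 * t - 2 + 1) (by omega),
        coeff_comp_linear _ _ _ (natDegree_Pd_le hsu t ((m : ℤ) - 2 * t - 2 + 1) (by omega)),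
        coeff_comp_linear _ _ _ (natDegree_Pd_le hsu (t+1) ((m : ℤ) - 2 * t - 2 - 1) (by omega)),
        coeff_Pd_top' hs₁ (t+1) q₀ hq₀ hmn ((m : ℤ) - 2 * t - 2) (by push_cast; omega),
        coeff_Pd_top' hs₂ (t+1) q₀ hq₀ hmn ((m : ℤ) - 2 * t - 2) (by push_cast; omega)] at h
    push_cast at h ⊢
    linear_combination h - ((Pd n cu ((m : ℤ) - 2 * t - 2 + 1)).coeff t
      + (Pd n cu ((m : ℤ) - 2 * t - 2 - 1)).coeff (t + 1)) * ha

end WeylAux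

end AuxWeyl

/-- for `ε = k/2 ∈ ½ℤ` with `ℓ = 2|ε| = |k|` and `g, Δ ≠ 0`, any
nonzero polynomial solution `Q` of `H̃^ε Q = Q H^ε` with all entries of degree
at most `n` in the Weyl algebra satisfies `n ≥ ℓ`. (In particular, for `ε = 1`
any nonzero polynomial solution has an entry of degree `≥ 2`.) -/
theorem min_degree_of_solution (g Δ : ℝ) (hg : g ≠ 0) (hΔ : Δ ≠ 0)
    (k : ℤ) (ε : ℝ) (hε : ε = (k : ℝ) / 2) (n : ℕ) (Q : M2)
    (hdeg : ∀ i j, Q i j ∈ weylDegLE n)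
    (hQ : Hop (-g) Δ ε * Q = Q * Hop g Δ ε) (hne : Q ≠ 0) :
    k.natAbs ≤ n := by
  classical
  open WeylAux in
  by_contra hcon
  push_neg at hcon
  -- the four entry equations, in canonical form
  have h00 : (opC * opA) * Q 0 0 + (-(g:ℂ)) • (opA * Q 0 0) + (-(g:ℂ)) • (opC * Q 0 0)
      + (ε:ℂ) • Q 0 0 + (Δ:ℂ) • Q 1 0
      = Q 0 0 * (opC * opA) + (g:ℂ) • (Q 0 0 * opA) + (g:ℂ) • (Q 0 0 * opC)
      + (ε:ℂ) • Q 0 0 + (Δ:ℂ) • Q 0 1 := by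
    have h := congrFun (congrFun hQ 0) 0
    simp only [Hop, Matrix.mul_apply, Fin.sum_univ_two, Matrix.cons_val', Matrix.cons_val_zero,
      Matrix.cons_val_one, Matrix.head_cons, Matrix.empty_val', Matrix.cons_val_fin_one,
      Matrix.head_fin_const, Matrix.of_apply] at h
    push_cast at h
    simp only [add_mul, sub_mul, mul_add, mul_sub, smul_mul_assoc, mul_smul_comm,
      one_mul, mul_one, smul_add, smul_sub] at h
    linear_combination (norm := module) h
  have h01 : (opC * opA) * Q 0 1 + (-(g:ℂ)) • (opA * Q 0 1) + (-(g:ℂ)) • (opC * Q 0 1)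
      + (ε:ℂ) • Q 0 1 + (Δ:ℂ) • Q 1 1
      = Q 0 1 * (opC * opA) + (-(g:ℂ)) • (Q 0 1 * opA) + (-(g:ℂ)) • (Q 0 1 * opC)
      + (-(ε:ℂ)) • Q 0 1 + (Δ:ℂ) • Q 0 0 := by
    have h := congrFun (congrFun hQ 0) 1
    simp only [Hop, Matrix.mul_apply, Fin.sum_univ_two, Matrix.cons_val', Matrix.cons_val_zero,
      Matrix.cons_val_one, Matrix.head_cons, Matrix.empty_val', Matrix.cons_val_fin_one,
      Matrix.head_fin_const, Matrix.of_apply] at h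
    push_cast at h
    simp only [add_mul, sub_mul, mul_add, mul_sub, smul_mul_assoc, mul_smul_comm,
      one_mul, mul_one, smul_add, smul_sub] at h
    linear_combination (norm := module) h
  have h10 : (opC * opA) * Q 1 0 + (g:ℂ) • (opA * Q 1 0) + (g:ℂ) • (opC * Q 1 0)
      + (-(ε:ℂ)) • Q 1 0 + (Δ:ℂ) • Q 0 0
      = Q 1 0 * (opC * opA) + (g:ℂ) • (Q 1 0 * opA) + (g:ℂ) • (Q 1 0 * opC)
      + (ε:ℂ) • Q 1 0 + (Δ:ℂ) • Q 1 1 := by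
    have h := congrFun (congrFun hQ 1) 0
    simp only [Hop, Matrix.mul_apply, Fin.sum_univ_two, Matrix.cons_val', Matrix.cons_val_zero,
      Matrix.cons_val_one, Matrix.head_cons, Matrix.empty_val', Matrix.cons_val_fin_one,
      Matrix.head_fin_const, Matrix.of_apply] at h
    push_cast at h
    simp only [add_mul, sub_mul, mul_add, mul_sub, smul_mul_assoc, mul_smul_comm,
      one_mul, mul_one, smul_add, smul_sub] at h
    linear_combination (norm := module) h
  have h11 : (opC * opA) * Q 1 1 + (g:ℂ) • (opA * Q 1 1) + (g:ℂ) • (opC * Q 1 1)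
      + (-(ε:ℂ)) • Q 1 1 + (Δ:ℂ) • Q 0 1
      = Q 1 1 * (opC * opA) + (-(g:ℂ)) • (Q 1 1 * opA) + (-(g:ℂ)) • (Q 1 1 * opC)
      + (-(ε:ℂ)) • Q 1 1 + (Δ:ℂ) • Q 1 0 := by
    have h := congrFun (congrFun hQ 1) 1
    simp only [Hop, Matrix.mul_apply, Fin.sum_univ_two, Matrix.cons_val', Matrix.cons_val_zero,
      Matrix.cons_val_one, Matrix.head_cons, Matrix.empty_val', Matrix.cons_val_fin_one,
      Matrix.head_fin_const, Matrix.of_apply] at h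
    push_cast at h
    simp only [add_mul, sub_mul, mul_add, mul_sub, smul_mul_assoc, mul_smul_comm,
      one_mul, mul_one, smul_add, smul_sub] at h
    linear_combination (norm := module) h
  -- coordinates
  obtain ⟨c00, hs00, hr00⟩ := exists_rep n (Q 0 0) (hdeg 0 0)
  obtain ⟨c01, hs01, hr01⟩ := exists_rep n (Q 0 1) (hdeg 0 1)
  obtain ⟨c10, hs10, hr10⟩ := exists_rep n (Q 1 0) (hdeg 1 0)
  obtain ⟨c11, hs11, hr11⟩ := exists_rep n (Q 1 1) (hdeg 1 1)
  -- the top level m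
  set s : Finset (ℕ × ℕ) := (Rn n).filter
    (fun pq => ¬(c00 pq = 0 ∧ c01 pq = 0 ∧ c10 pq = 0 ∧ c11 pq = 0)) with hs_def
  rcases Finset.eq_empty_or_nonempty s with hemp | hsne
  · -- all coordinates vanish, so Q = 0, contradiction
    apply hne
    have hall : ∀ pq ∈ Rn n, c00 pq = 0 ∧ c01 pq = 0 ∧ c10 pq = 0 ∧ c11 pq = 0 := by
      intro pq hpq
      by_contra hc
      have : pq ∈ s := Finset.mem_filter.mpr ⟨hpq, hc⟩
      rw [hemp] at this
      exact absurd this (Finset.notMem_empty pq)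
    have hrz : ∀ (c : ℕ × ℕ → ℂ), (∀ pq ∈ Rn n, c pq = 0) → rep n c = 0 := by
      intro c hc
      rw [rep]
      apply Finset.sum_eq_zero
      intro pq hpq
      rw [hc pq hpq, zero_smul]
    have e00 : Q 0 0 = 0 := by rw [hr00]; exact hrz c00 (fun pq h => (hall pq h).1)
    have e01 : Q 0 1 = 0 := by rw [hr01]; exact hrz c01 (fun pq h => (hall pq h).2.1)
    have e10 : Q 1 0 = 0 := by rw [hr10]; exact hrz c10 (fun pq h => (hall pq h).2.2.1)
    have e11 : Q 1 1 = 0 := by rw [hr11]; exact hrz c11 (fun pq h => (hall pq h).2.2.2)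
    refine Matrix.ext fun i j => ?_
    fin_cases i <;> fin_cases j <;> simp only [Matrix.zero_apply]
    · exact e00
    · exact e01
    · exact e10
    · exact e11
  · set lv : Finset ℕ := s.image (fun pq => pq.1 + pq.2) with hlv_def
    have hlvne : lv.Nonempty := hsne.image _
    set m : ℕ := lv.max' hlvne with hm_def
    -- m ≤ n
    have hm_le : m ≤ n := by
      obtain ⟨pq, hpqs, hpqm⟩ := Finset.mem_image.mp (lv.max'_mem hlvne)
      obtain ⟨hpqR, hpqc⟩ := Finset.mem_filter.mp hpqs
      by_contra hmn
      push_neg at hmn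
      exact hpqc ⟨hs00 pq (by omega), hs01 pq (by omega), hs10 pq (by omega),
        hs11 pq (by omega)⟩
    -- support bounds at level m
    have hm00 : ∀ pq : ℕ × ℕ, m < pq.1 + pq.2 → c00 pq = 0 := by
      intro pq hm'
      by_contra hc0
      have hpn : pq.1 + pq.2 ≤ n := by
        by_contra hh
        exact hc0 (hs00 pq (by omega))
      have hpqs : pq ∈ s := Finset.mem_filter.mpr
        ⟨by simp only [Rn, Finset.mem_product, Finset.mem_range]; omega,
         fun hand => hc0 hand.1⟩
      have := lv.le_max' _ (Finset.mem_image_of_mem _ hpqs)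
      omega
    have hm01 : ∀ pq : ℕ × ℕ, m < pq.1 + pq.2 → c01 pq = 0 := by
      intro pq hm'
      by_contra hc0
      have hpn : pq.1 + pq.2 ≤ n := by
        by_contra hh
        exact hc0 (hs01 pq (by omega))
      have hpqs : pq ∈ s := Finset.mem_filter.mpr
        ⟨by simp only [Rn, Finset.mem_product, Finset.mem_range]; omega,
         fun hand => hc0 hand.2.1⟩
      have := lv.le_max' _ (Finset.mem_image_of_mem _ hpqs)
      omega
    have hm10 : ∀ pq : ℕ × ℕ, m < pq.1 + pq.2 → c10 pq = 0 := by
      intro pq hm'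
      by_contra hc0
      have hpn : pq.1 + pq.2 ≤ n := by
        by_contra hh
        exact hc0 (hs10 pq (by omega))
      have hpqs : pq ∈ s := Finset.mem_filter.mpr
        ⟨by simp only [Rn, Finset.mem_product, Finset.mem_range]; omega,
         fun hand => hc0 hand.2.2.1⟩
      have := lv.le_max' _ (Finset.mem_image_of_mem _ hpqs)
      omega
    have hm11 : ∀ pq : ℕ × ℕ, m < pq.1 + pq.2 → c11 pq = 0 := by
      intro pq hm'
      by_contra hc0
      have hpn : pq.1 + pq.2 ≤ n := by
        by_contra hh
        exact hc0 (hs11 pq (by omega))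
      have hpqs : pq ∈ s := Finset.mem_filter.mpr
        ⟨by simp only [Rn, Finset.mem_product, Finset.mem_range]; omega,
         fun hand => hc0 hand.2.2.2⟩
      have := lv.le_max' _ (Finset.mem_image_of_mem _ hpqs)
      omega
    -- master identities
    have hMI00 := master n (-(g:ℂ)) (g:ℂ) (ε:ℂ) (ε:ℂ) (Δ:ℂ) (Q 0 0) (Q 1 0) (Q 0 1)
      c00 c10 c01 hr00 hr10 hr01 h00
    have hMI01 := master n (-(g:ℂ)) (-(g:ℂ)) (ε:ℂ) (-(ε:ℂ)) (Δ:ℂ) (Q 0 1) (Q 1 1) (Q 0 0)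
      c01 c11 c00 hr01 hr11 hr00 h01
    have hMI10 := master n (g:ℂ) (g:ℂ) (-(ε:ℂ)) (ε:ℂ) (Δ:ℂ) (Q 1 0) (Q 0 0) (Q 1 1)
      c10 c00 c11 hr10 hr00 hr11 h10
    have hMI11 := master n (g:ℂ) (-(g:ℂ)) (-(ε:ℂ)) (-(ε:ℂ)) (Δ:ℂ) (Q 1 1) (Q 0 1) (Q 1 0)
      c11 c01 c10 hr11 hr01 hr10 h11
    have hgC : (g : ℂ) ≠ 0 := by exact_mod_cast hg
    have hgne : (-(g:ℂ)) ≠ (g:ℂ) := by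
      intro h
      apply hgC
      linear_combination (-1/2 : ℂ) * h
    -- Step A: diagonal coordinates vanish at level m
    have hzA00 := extractA hm_le (-(g:ℂ)) (g:ℂ) (ε:ℂ) (ε:ℂ) (Δ:ℂ) c00 c10 c01
      hm00 hm10 hm01 hgne hMI00
    have hzA11 := extractA hm_le (g:ℂ) (-(g:ℂ)) (-(ε:ℂ)) (-(ε:ℂ)) (Δ:ℂ) c11 c01 c10
      hm11 hm01 hm10 (fun h => hgne h.symm) hMI11
    -- Step B: off-diagonal coordinates vanish at level m
    have hε2 : (ε : ℂ) = (k : ℂ) / 2 := by rw [hε]; push_cast; ring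
    have hB01 := extractB hm_le (-(g:ℂ)) (-(g:ℂ)) (ε:ℂ) (-(ε:ℂ)) (Δ:ℂ) c01 c11 c00
      hm01 hm11 hm00 rfl hMI01
    have hB10 := extractB hm_le (g:ℂ) (g:ℂ) (-(ε:ℂ)) (ε:ℂ) (Δ:ℂ) c10 c00 c11
      hm10 hm00 hm11 rfl hMI10
    have hzB01 : ∀ p₀ q₀ : ℕ, p₀ + q₀ = m → c01 (p₀, q₀) = 0 := by
      intro p₀ q₀ hpq
      have h := hB01 p₀ q₀ hpq
      rw [hzA00 p₀ q₀ hpq, hzA11 p₀ q₀ hpq] at h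
      have hfac : ((m : ℂ) - 2 * p₀ + (ε:ℂ) - (-(ε:ℂ))) ≠ 0 := by
        have : ((m : ℂ) - 2 * p₀ + (ε:ℂ) - (-(ε:ℂ))) = (((m : ℤ) - 2 * p₀ + k : ℤ) : ℂ) := by
          rw [hε2]; push_cast; ring
        rw [this]
        exact_mod_cast (by omega : ((m : ℤ) - 2 * p₀ + k : ℤ) ≠ 0)
      have h' : ((m : ℂ) - 2 * p₀ + (ε:ℂ) - (-(ε:ℂ))) * c01 (p₀, q₀) = 0 := by
        rw [h]; ring
      rcases mul_eq_zero.mp h' with h'' | h''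
      · exact absurd h'' hfac
      · exact h''
    have hzB10 : ∀ p₀ q₀ : ℕ, p₀ + q₀ = m → c10 (p₀, q₀) = 0 := by
      intro p₀ q₀ hpq
      have h := hB10 p₀ q₀ hpq
      rw [hzA00 p₀ q₀ hpq, hzA11 p₀ q₀ hpq] at h
      have hfac : ((m : ℂ) - 2 * p₀ + (-(ε:ℂ)) - (ε:ℂ)) ≠ 0 := by
        have : ((m : ℂ) - 2 * p₀ + (-(ε:ℂ)) - (ε:ℂ)) = (((m : ℤ) - 2 * p₀ - k : ℤ) : ℂ) := by
          rw [hε2]; push_cast; ring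
        rw [this]
        exact_mod_cast (by omega : ((m : ℤ) - 2 * p₀ - k : ℤ) ≠ 0)
      have h' : ((m : ℂ) - 2 * p₀ + (-(ε:ℂ)) - (ε:ℂ)) * c10 (p₀, q₀) = 0 := by
        rw [h]; ring
      rcases mul_eq_zero.mp h' with h'' | h''
      · exact absurd h'' hfac
      · exact h''
    -- contradiction with maximality of m
    obtain ⟨pq, hpqs, hpqm⟩ := Finset.mem_image.mp (lv.max'_mem hlvne)
    obtain ⟨hpqR, hpqc⟩ := Finset.mem_filter.mp hpqs
    exact hpqc ⟨hzA00 pq.1 pq.2 hpqm, hzB01 pq.1 pq.2 hpqm,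
      hzB10 pq.1 pq.2 hpqm, hzA11 pq.1 pq.2 hpqm⟩
end

section
/- Let $Q_0 = \begin{pmatrix} 0 & a^\ell \\ (-1)^\ell (a^\dagger)^\ell & 0\end{pmatrix} + \overline{Q}$, where $\overline{Q} \in \mathrm{Mat}_2(\mathbb{C}[a,a^\dagger])$ has all entries of degree strictly less than $\ell$. Then $Q_0$ has no nonzero right annihilator in $\mathrm{Mat}_2(\mathbb{C}[a,a^\dagger])$: if $A \in \mathrm{Mat}_2(\mathbb{C}[a,a^\dagger])$ satisfies $Q_0 A = 0$, then $A = 0$. -/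
open Polynomial

namespace WeylAux
noncomputable section

def w (p q : ℕ) : E := opA ^ p * opC ^ q

lemma comm1 : opA * opC = opC * opA + 1 := by
  apply LinearMap.ext; intro f
  simp [opA, opC, Module.End.mul_apply, derivative_mul]
  ring

lemma comm1' : opC * opA = opA * opC - 1 := eq_sub_iff_add_eq.mpr comm1.symm

lemma commA : ∀ p : ℕ, opC * opA ^ (p+1) = opA ^ (p+1) * opC - ((p:ℂ)+1) • opA ^ p := by
  intro p
  induction p with
  | zero => simp [comm1]
  | succ p ih =>
    have h1 : opC * opA ^ (p+2) = (opC * opA ^ (p+1)) * opA := by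
      rw [mul_assoc, ← pow_succ]
    rw [h1, ih, sub_mul, mul_assoc, comm1', mul_sub, ← mul_assoc, ← pow_succ,
      mul_one, smul_mul_assoc, ← pow_succ]
    push_cast; ring_nf; module

lemma commC : ∀ q : ℕ, opC ^ (q+1) * opA = opA * opC ^ (q+1) - ((q:ℂ)+1) • opC ^ q := by
  intro q
  induction q with
  | zero => simp [comm1']
  | succ q ih =>
    have h1 : opC ^ (q+2) * opA = opC * (opC ^ (q+1) * opA) := by
      rw [← mul_assoc, ← pow_succ']
    rw [h1, ih, mul_sub, ← mul_assoc, comm1', sub_mul, mul_assoc, ← pow_succ',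
      one_mul, mul_smul_comm, ← pow_succ']
    push_cast; ring_nf; module

/-! ### filtration basics -/

lemma w_mem_le {p q d : ℕ} (h : p + q ≤ d) : w p q ∈ weylDegLE d :=
  Submodule.subset_span ⟨p, q, h, rfl⟩

lemma w_mem_lt {p q d : ℕ} (h : p + q < d) : w p q ∈ weylDegLT d :=
  Submodule.subset_span ⟨p, q, h, rfl⟩

lemma lt_mono {d e : ℕ} (h : d ≤ e) : weylDegLT d ≤ weylDegLT e :=
  Submodule.span_mono (fun T ⟨p, q, hp, hT⟩ => ⟨p, q, lt_of_lt_of_le hp h, hT⟩)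

lemma le_eq_lt_succ (d : ℕ) : weylDegLE d = weylDegLT (d+1) := by
  unfold weylDegLE weylDegLT
  congr 1; ext T
  simp [Nat.lt_succ_iff]

lemma le_mono {d e : ℕ} (h : d ≤ e) : weylDegLE d ≤ weylDegLE e := by
  rw [le_eq_lt_succ, le_eq_lt_succ]; exact lt_mono (by omega)

lemma lt_le_le (d : ℕ) : weylDegLT d ≤ weylDegLE d := by
  rw [le_eq_lt_succ]; exact lt_mono (by omega)

lemma lt_zero : weylDegLT 0 = ⊥ := by
  unfold weylDegLT
  convert Submodule.span_empty
  ext T; simp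

lemma lt_zero_mem {T : E} (h : T ∈ weylDegLT 0) : T = 0 := by
  rw [lt_zero] at h; simpa using h

/-! ### multiplication and the filtration -/

lemma mulA_left {m : ℕ} (ℓ : ℕ) {T : E} (h : T ∈ weylDegLE m) :
    opA ^ ℓ * T ∈ weylDegLE (ℓ + m) := by
  induction h using Submodule.span_induction with
  | mem x hx =>
    obtain ⟨p, q, hpq, rfl⟩ := hx
    rw [← mul_assoc, ← pow_add]
    exact w_mem_le (by omega)
  | zero => rw [mul_zero]; exact zero_mem _
  | add x y hx hy ihx ihy => rw [mul_add]; exact add_mem ihx ihy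
  | smul a x hx ihx => rw [mul_smul_comm]; exact Submodule.smul_mem _ _ ihx

lemma mulC_one {m : ℕ} {T : E} (h : T ∈ weylDegLE m) :
    opC * T ∈ weylDegLE (m + 1) := by
  induction h using Submodule.span_induction with
  | mem x hx =>
    obtain ⟨p, q, hpq, rfl⟩ := hx
    match p with
    | 0 =>
      have : opC * (opA ^ 0 * opC ^ q) = w 0 (q+1) := by
        simp [w, pow_succ']
    
      rw [this]; exact w_mem_le (by omega)
    | (p+1) =>
      have : opC * (opA ^ (p+1) * opC ^ q)
          = w (p+1) (q+1) - ((p:ℂ)+1) • w p q := by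
        unfold w
        rw [← mul_assoc, commA, sub_mul, smul_mul_assoc, mul_assoc, ← pow_succ']
      rw [this]
      exact sub_mem (w_mem_le (by omega)) (Submodule.smul_mem _ _ (w_mem_le (by omega)))
  | zero => rw [mul_zero]; exact zero_mem _
  | add x y hx hy ihx ihy => rw [mul_add]; exact add_mem ihx ihy
  | smul a x hx ihx => rw [mul_smul_comm]; exact Submodule.smul_mem _ _ ihx

lemma mulC_left {m : ℕ} (ℓ : ℕ) {T : E} (h : T ∈ weylDegLE m) :
    opC ^ ℓ * T ∈ weylDegLE (ℓ + m) := by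
  induction ℓ with
  | zero => simpa using h
  | succ ℓ ih =>
    have : opC ^ (ℓ+1) * T = opC * (opC ^ ℓ * T) := by rw [← mul_assoc, ← pow_succ']
    rw [this]
    have := mulC_one ih
    exact le_mono (by omega) this

lemma mul_le {m n : ℕ} {S T : E} (hS : S ∈ weylDegLE m) (hT : T ∈ weylDegLE n) :
    S * T ∈ weylDegLE (m + n) := by
  induction hS using Submodule.span_induction with
  | mem x hx =>
    obtain ⟨p, q, hpq, rfl⟩ := hx
    rw [mul_assoc]
    exact le_mono (by omega) (mulA_left p (mulC_left q hT))
  | zero => rw [zero_mul]; exact zero_mem _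
  | add x y hx hy ihx ihy => rw [add_mul]; exact add_mem ihx ihy
  | smul a x hx ihx => rw [smul_mul_assoc]; exact Submodule.smul_mem _ _ ihx

lemma mul_lt_le {m n : ℕ} {S T : E} (hS : S ∈ weylDegLT m) (hT : T ∈ weylDegLE n) :
    S * T ∈ weylDegLT (m + n) := by
  match m with
  | 0 => rw [lt_zero_mem hS, zero_mul]; exact zero_mem _
  | (m+1) =>
    rw [← le_eq_lt_succ] at hS
    have := mul_le hS hT
    rw [le_eq_lt_succ] at this
    exact lt_mono (by omega) this

lemma mulC_right_lt {m : ℕ} (q : ℕ) {T : E} (h : T ∈ weylDegLT m) :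
    T * opC ^ q ∈ weylDegLT (m + q) := by
  induction h using Submodule.span_induction with
  | mem x hx =>
    obtain ⟨p, r, hpr, rfl⟩ := hx
    rw [mul_assoc, ← pow_add]
    exact w_mem_lt (by omega)
  | zero => rw [zero_mul]; exact zero_mem _
  | add x y hx hy ihx ihy => rw [add_mul]; exact add_mem ihx ihy
  | smul a x hx ihx => rw [smul_mul_assoc]; exact Submodule.smul_mem _ _ ihx

/-! ### every element of the Weyl algebra has finite degree -/

lemma exists_le {T : E} (h : T ∈ WeylAlg) : ∃ d, T ∈ weylDegLE d := by
  induction h using Algebra.adjoin_induction with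
  | mem x hx =>
    rcases hx with h | h
    · exact ⟨1, h ▸ by simpa [w] using w_mem_le (p := 1) (q := 0) (le_refl 1)⟩
    · exact ⟨1, h ▸ by simpa [w] using w_mem_le (p := 0) (q := 1) (le_refl 1)⟩
  | algebraMap r =>
    refine ⟨0, ?_⟩
    have h1 : (1 : E) ∈ weylDegLE 0 := by simpa [w] using w_mem_le (p := 0) (q := 0) le_rfl
    have : algebraMap ℂ E r = r • (1 : E) := by simp [Algebra.algebraMap_eq_smul_one]
    rw [this]; exact Submodule.smul_mem _ _ h1
  | add x y hx hy ihx ihy =>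
    obtain ⟨d1, h1⟩ := ihx; obtain ⟨d2, h2⟩ := ihy
    exact ⟨max d1 d2, add_mem (le_mono (le_max_left _ _) h1) (le_mono (le_max_right _ _) h2)⟩
  | mul x y hx hy ihx ihy =>
    obtain ⟨d1, h1⟩ := ihx; obtain ⟨d2, h2⟩ := ihy
    exact ⟨d1 + d2, mul_le h1 h2⟩

/-! ### the lowering derivations δ, γ -/

def del : Module.End ℂ E := LinearMap.mulRight ℂ opC - LinearMap.mulLeft ℂ opC
def gam : Module.End ℂ E := LinearMap.mulLeft ℂ opA - LinearMap.mulRight ℂ opA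

lemma del_apply (T : E) : del T = T * opC - opC * T := rfl
lemma gam_apply (T : E) : gam T = opA * T - T * opA := rfl

lemma del_w (p q : ℕ) : del (w p q) = (p : ℂ) • w (p-1) q := by
  match p with
  | 0 =>
    simp only [del_apply, w, pow_zero, one_mul, Nat.cast_zero, zero_smul]
    rw [← pow_succ, ← pow_succ']
    exact sub_self _
  | (p+1) =>
    have h1 : (opA^(p+1) * opC^q) * opC = opA^(p+1) * opC^(q+1) := by
      rw [mul_assoc, ← pow_succ]
    have h2 : opC * (opA^(p+1) * opC^q)
        = opA^(p+1)*opC^(q+1) - ((p:ℂ)+1) • (opA^p * opC^q) := by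
      rw [← mul_assoc, commA, sub_mul, smul_mul_assoc, mul_assoc, ← pow_succ']
    simp only [del_apply, w]
    rw [h1, h2, sub_sub_cancel, Nat.add_sub_cancel]
    push_cast
    rfl

lemma gam_w (p q : ℕ) : gam (w p q) = (q : ℂ) • w p (q-1) := by
  match q with
  | 0 =>
    simp only [gam_apply, w, pow_zero, mul_one, Nat.cast_zero, zero_smul]
    rw [← pow_succ', ← pow_succ]
    exact sub_self _
  | (q+1) =>
    have h1 : opA * (opA^p * opC^(q+1)) = opA^(p+1) * opC^(q+1) := by
      rw [← mul_assoc, ← pow_succ']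
    have h2 : (opA^p * opC^(q+1)) * opA
        = opA^(p+1)*opC^(q+1) - ((q:ℂ)+1) • (opA^p * opC^q) := by
      rw [mul_assoc, commC, mul_sub, mul_smul_comm, ← mul_assoc, ← pow_succ]
    simp only [gam_apply, w]
    rw [h1, h2, sub_sub_cancel, Nat.add_sub_cancel]
    push_cast
    rfl

lemma descFactorial_front (n k : ℕ) : n.descFactorial (k+1) = n * (n-1).descFactorial k := by
  match n with
  | 0 => simp
  | (n+1) => rw [Nat.succ_descFactorial_succ]; simp

lemma del_pow_w (i p q : ℕ) : (del ^ i) (w p q) = (p.descFactorial i : ℂ) • w (p-i) q := by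
  induction i generalizing p with
  | zero => simp
  | succ i ih =>
    rw [pow_succ, Module.End.mul_apply, del_w, map_smul, ih, smul_smul,
      descFactorial_front, Nat.sub_sub, Nat.add_comm 1 i]
    push_cast
    ring_nf

lemma gam_pow_w (j p q : ℕ) : (gam ^ j) (w p q) = (q.descFactorial j : ℂ) • w p (q-j) := by
  induction j generalizing q with
  | zero => simp
  | succ j ih =>
    rw [pow_succ, Module.End.mul_apply, gam_w, map_smul, ih, smul_smul,
      descFactorial_front, Nat.sub_sub, Nat.add_comm 1 j]
    push_cast
    ring_nf

/-- The degree-`(i,j)` detector applied to a normally ordered monomial. -/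
lemma det_w (i j p q : ℕ) :
    (del ^ i) ((gam ^ j) (w p q)) =
      ((p.descFactorial i * q.descFactorial j : ℕ) : ℂ) • w (p-i) (q-j) := by
  rw [gam_pow_w, map_smul, del_pow_w, smul_smul]
  push_cast
  ring_nf


/-! ### detectors kill low degrees -/

lemma det_lt {D : ℕ} {S : E} (hS : S ∈ weylDegLT D) {i j : ℕ} (hij : i + j = D) :
    (del ^ i) ((gam ^ j) S) = 0 := by
  induction hS using Submodule.span_induction with
  | mem x hx =>
    obtain ⟨p, q, hpq, rfl⟩ := hx
    rw [show opA ^ p * opC ^ q = w p q from rfl, det_w]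
    have hz : p.descFactorial i * q.descFactorial j = 0 := by
      rcases Nat.lt_or_ge p i with h | h
      · rw [Nat.descFactorial_eq_zero_iff_lt.mpr h, zero_mul]
      · rw [Nat.descFactorial_eq_zero_iff_lt.mpr (show q < j by omega), mul_zero]
    rw [hz]; simp
  | zero => simp
  | add x y hx hy ihx ihy => rw [map_add, map_add, ihx, ihy, add_zero]
  | smul a x hx ihx => rw [map_smul, map_smul, ihx, smul_zero]

/-! ### normal ordering with remainder -/

lemma mulC_one_lt {m : ℕ} {T : E} (h : T ∈ weylDegLT m) :
    opC * T ∈ weylDegLT (m + 1) := by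
  match m with
  | 0 => rw [lt_zero_mem h, mul_zero]; exact zero_mem _
  | (m+1) =>
    rw [← le_eq_lt_succ] at h
    rw [show m + 1 + 1 = (m + 1) + 1 from rfl, ← le_eq_lt_succ]
    exact mulC_one h

lemma ord (ℓ p : ℕ) :
    ∃ L ∈ weylDegLT (ℓ + p), opC ^ ℓ * opA ^ p = opA ^ p * opC ^ ℓ + L := by
  induction ℓ with
  | zero => exact ⟨0, zero_mem _, by simp⟩
  | succ ℓ ih =>
    obtain ⟨L, hL, hEq⟩ := ih
    match p with
    | 0 => exact ⟨0, zero_mem _, by simp⟩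
    | (p+1) =>
      refine ⟨-(((p:ℂ)+1) • (opA ^ p * opC ^ ℓ)) + opC * L, ?_, ?_⟩
      · refine add_mem (neg_mem (Submodule.smul_mem _ _ (w_mem_lt (by omega)))) ?_
        exact lt_mono (by omega) (mulC_one_lt hL)
      · have h1 : opC ^ (ℓ+1) * opA ^ (p+1) = opC * (opC ^ ℓ * opA ^ (p+1)) := by
          rw [← mul_assoc, ← pow_succ']
        rw [h1, hEq, mul_add, ← mul_assoc, commA, sub_mul, smul_mul_assoc,
          mul_assoc, ← pow_succ']
        abel

/-! ### span descriptions via images -/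

def vmap : ℕ × ℕ → E := fun x => w x.1 x.2

lemma le_eq_span (d : ℕ) :
    weylDegLE d = Submodule.span ℂ (vmap '' {x : ℕ × ℕ | x.1 + x.2 ≤ d}) := by
  unfold weylDegLE; congr 1; ext T
  constructor
  · rintro ⟨p, q, h, rfl⟩; exact ⟨(p,q), h, rfl⟩
  · rintro ⟨⟨p,q⟩, h, rfl⟩; exact ⟨p, q, h, rfl⟩

lemma lt_eq_span (d : ℕ) :
    weylDegLT d = Submodule.span ℂ (vmap '' {x : ℕ × ℕ | x.1 + x.2 < d}) := by
  unfold weylDegLT; congr 1; ext T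
  constructor
  · rintro ⟨p, q, h, rfl⟩; exact ⟨(p,q), h, rfl⟩
  · rintro ⟨⟨p,q⟩, h, rfl⟩; exact ⟨p, q, h, rfl⟩

lemma one_ne_zero_E : (1 : E) ≠ 0 := by
  intro h
  have h2 := LinearMap.congr_fun h (1 : Polynomial ℂ)
  simp at h2

/-! ### detector completeness (KEY2) -/

lemma key2 {d : ℕ} {T : E} (hT : T ∈ weylDegLE d)
    (h0 : ∀ i j, i + j = d → (del ^ i) ((gam ^ j) T) = 0) : T ∈ weylDegLT d := by
  rw [le_eq_span, Finsupp.mem_span_image_iff_linearCombination] at hT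
  obtain ⟨l, hls, rfl⟩ := hT
  rw [Finsupp.mem_supported] at hls
  rw [lt_eq_span, Finsupp.mem_span_image_iff_linearCombination]
  refine ⟨l, ?_, rfl⟩
  rw [Finsupp.mem_supported]
  intro x hx
  have hxd : x.1 + x.2 ≤ d := hls hx
  rcases Nat.lt_or_ge (x.1 + x.2) d with h | h
  · exact h
  exfalso
  have hsum : x.1 + x.2 = d := le_antisymm hxd h
  have hdet := h0 x.1 x.2 hsum
  rw [Finsupp.linearCombination_apply, map_finsuppSum, map_finsuppSum,
    Finsupp.sum] at hdet
  have hterm : ∀ y ∈ l.support, y ≠ x →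
      (del ^ x.1) ((gam ^ x.2) (l y • vmap y)) = 0 := by
    intro y hy hne
    have hyd : y.1 + y.2 ≤ d := hls hy
    rw [map_smul, map_smul, show vmap y = w y.1 y.2 from rfl, det_w]
    have hz : y.1.descFactorial x.1 * y.2.descFactorial x.2 = 0 := by
      rcases Nat.lt_or_ge y.1 x.1 with h1 | h1
      · rw [Nat.descFactorial_eq_zero_iff_lt.mpr h1, zero_mul]
      · rcases Nat.lt_or_ge y.2 x.2 with h2 | h2
        · rw [Nat.descFactorial_eq_zero_iff_lt.mpr h2, mul_zero]
        · exact absurd (Prod.ext (by omega) (by omega)) hne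
    rw [hz]; simp
  rw [Finset.sum_eq_single x hterm (fun hxs => absurd hx hxs)] at hdet
  rw [map_smul, map_smul, show vmap x = w x.1 x.2 from rfl, det_w,
    Nat.sub_self, Nat.sub_self, Nat.descFactorial_self, Nat.descFactorial_self,
    smul_smul, show w 0 0 = (1 : E) by simp [w]] at hdet
  rcases smul_eq_zero.mp hdet with hc | h1
  · have hfac : ((x.1.factorial * x.2.factorial : ℕ) : ℂ) ≠ 0 := by
      exact_mod_cast Nat.cast_ne_zero.mpr
        (Nat.mul_ne_zero x.1.factorial_ne_zero x.2.factorial_ne_zero)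
    rcases mul_eq_zero.mp hc with h1 | h2
    · exact (Finsupp.mem_support_iff.mp hx) h1
    · exact hfac h2
  · exact one_ne_zero_E h1

/-! ### lifting detectors through multiplication by opA^ℓ, opC^ℓ -/

lemma liftA {d : ℕ} (ℓ : ℕ) {T : E} (hT : T ∈ weylDegLE d) {i j : ℕ} (hij : i + j = d) :
    (del ^ (ℓ + i)) ((gam ^ j) (opA ^ ℓ * T)) =
      ((ℓ + i).descFactorial ℓ : ℂ) • (del ^ i) ((gam ^ j) T) := by
  induction hT using Submodule.span_induction with
  | mem x hx =>
    obtain ⟨p, q, hpq, rfl⟩ := hx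
    have hm : opA ^ ℓ * (opA ^ p * opC ^ q) = w (ℓ + p) q := by
      rw [← mul_assoc, ← pow_add]; rfl
    rw [hm, det_w, show opA ^ p * opC ^ q = w p q from rfl, det_w]
    by_cases hc : i ≤ p ∧ j ≤ q
    · have hp : p = i := by omega
      have hq : q = j := by omega
      subst hp; subst hq
      simp only [Nat.sub_self, Nat.descFactorial_self, smul_smul]
      congr 1
      have hfa := Nat.factorial_mul_descFactorial (Nat.le_add_right ℓ p)
      rw [Nat.add_sub_cancel_left] at hfa
      push_cast [← hfa]
      ring
    · rcases Nat.lt_or_ge q j with hq | hq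
      · simp [Nat.descFactorial_eq_zero_iff_lt.mpr hq]
      · have hpi : p < i := by omega
        simp [Nat.descFactorial_eq_zero_iff_lt.mpr hpi,
          Nat.descFactorial_eq_zero_iff_lt.mpr (show ℓ + p < ℓ + i by omega)]
  | zero => simp
  | add x y hx hy ihx ihy =>
    rw [mul_add, map_add, map_add, ihx, ihy, map_add, map_add, smul_add]
  | smul a x hx ihx =>
    rw [mul_smul_comm, map_smul, map_smul, ihx, map_smul, map_smul, smul_comm]

lemma liftC {d : ℕ} (ℓ : ℕ) {T : E} (hT : T ∈ weylDegLE d) {i j : ℕ} (hij : i + j = d) :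
    (del ^ i) ((gam ^ (ℓ + j)) (opC ^ ℓ * T)) =
      ((ℓ + j).descFactorial ℓ : ℂ) • (del ^ i) ((gam ^ j) T) := by
  induction hT using Submodule.span_induction with
  | mem x hx =>
    obtain ⟨p, q, hpq, rfl⟩ := hx
    obtain ⟨L, hL, hEq⟩ := ord ℓ p
    have hm : opC ^ ℓ * (opA ^ p * opC ^ q) = w p (ℓ + q) + L * opC ^ q := by
      rw [← mul_assoc, hEq, add_mul, mul_assoc, ← pow_add]; rfl
    have hLq : L * opC ^ q ∈ weylDegLT (i + (ℓ + j)) := by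
      exact lt_mono (by omega) (mulC_right_lt q hL)
    rw [hm, map_add, map_add, det_lt hLq rfl, add_zero, det_w,
      show opA ^ p * opC ^ q = w p q from rfl, det_w]
    by_cases hc : i ≤ p ∧ j ≤ q
    · have hp : p = i := by omega
      have hq : q = j := by omega
      subst hp; subst hq
      simp only [Nat.sub_self, Nat.descFactorial_self, smul_smul]
      congr 1
      have hfa := Nat.factorial_mul_descFactorial (Nat.le_add_right ℓ q)
      rw [Nat.add_sub_cancel_left] at hfa
      push_cast [← hfa]
      ring
    · rcases Nat.lt_or_ge p i with hp | hp
      · simp [Nat.descFactorial_eq_zero_iff_lt.mpr hp]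
      · have hqj : q < j := by omega
        simp [Nat.descFactorial_eq_zero_iff_lt.mpr hqj,
          Nat.descFactorial_eq_zero_iff_lt.mpr (show ℓ + q < ℓ + j by omega)]
  | zero => simp
  | add x y hx hy ihx ihy =>
    rw [mul_add, map_add, map_add, ihx, ihy, map_add, map_add, smul_add]
  | smul a x hx ihx =>
    rw [mul_smul_comm, map_smul, map_smul, ihx, map_smul, map_smul, smul_comm]

/-! ### degree is exactly additive -/

lemma stepA {d : ℕ} (ℓ : ℕ) {T : E} (hT : T ∈ weylDegLE d)
    (h : opA ^ ℓ * T ∈ weylDegLT (ℓ + d)) : T ∈ weylDegLT d := by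
  apply key2 hT
  intro i j hij
  have h1 := liftA ℓ hT hij
  rw [det_lt h (by omega)] at h1
  have hC : ((ℓ + i).descFactorial ℓ : ℂ) ≠ 0 :=
    Nat.cast_ne_zero.mpr (by rw [Ne, Nat.descFactorial_eq_zero_iff_lt]; omega)
  exact (smul_eq_zero.mp h1.symm).resolve_left hC

lemma stepC {d : ℕ} (ℓ : ℕ) {T : E} (hT : T ∈ weylDegLE d)
    (h : opC ^ ℓ * T ∈ weylDegLT (ℓ + d)) : T ∈ weylDegLT d := by
  apply key2 hT
  intro i j hij
  have h1 := liftC ℓ hT hij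
  rw [det_lt h (by omega)] at h1
  have hC : ((ℓ + j).descFactorial ℓ : ℂ) ≠ 0 :=
    Nat.cast_ne_zero.mpr (by rw [Ne, Nat.descFactorial_eq_zero_iff_lt]; omega)
  exact (smul_eq_zero.mp h1.symm).resolve_left hC

/-! ### the column argument -/

lemma column (ℓ : ℕ) {Q00 Q01 Q10 Q11 u v : E}
    (h00 : Q00 ∈ weylDegLT ℓ) (h01 : Q01 ∈ weylDegLT ℓ)
    (h10 : Q10 ∈ weylDegLT ℓ) (h11 : Q11 ∈ weylDegLT ℓ)
    (hu : u ∈ WeylAlg) (hv : v ∈ WeylAlg)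
    (e0 : Q00 * u + (opA ^ ℓ * v + Q01 * v) = 0)
    (e1 : ((-1:ℂ) ^ ℓ) • (opC ^ ℓ * u) + Q10 * u + Q11 * v = 0) :
    u = 0 ∧ v = 0 := by
  classical
  have hdu := exists_le hu
  have hdv := exists_le hv
  set du := Nat.find hdu with hdu_def
  set dv := Nat.find hdv with hdv_def
  have hule : u ∈ weylDegLE du := Nat.find_spec hdu
  have hvle : v ∈ weylDegLE dv := Nat.find_spec hdv
  have hmin_u : ∀ k, k < du → u ∉ weylDegLE k := fun k hk => Nat.find_min hdu hk
  have hmin_v : ∀ k, k < dv → v ∉ weylDegLE k := fun k hk => Nat.find_min hdv hk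
  have hex_u : u ≠ 0 → u ∉ weylDegLT du := by
    intro hne hmem
    rcases Nat.eq_zero_or_pos du with h0 | h0
    · rw [h0] at hmem; exact hne (lt_zero_mem hmem)
    · obtain ⟨k, hk⟩ : ∃ k, du = k + 1 := ⟨du - 1, by omega⟩
      rw [hk, ← le_eq_lt_succ] at hmem
      exact hmin_u k (by omega) hmem
  have hex_v : v ≠ 0 → v ∉ weylDegLT dv := by
    intro hne hmem
    rcases Nat.eq_zero_or_pos dv with h0 | h0
    · rw [h0] at hmem; exact hne (lt_zero_mem hmem)
    · obtain ⟨k, hk⟩ : ∃ k, dv = k + 1 := ⟨dv - 1, by omega⟩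
      rw [hk, ← le_eq_lt_succ] at hmem
      exact hmin_v k (by omega) hmem
  -- extract memberships of the "creation" equations
  have hCu : ∀ D : ℕ, u ∈ weylDegLE D → v ∈ weylDegLE D →
      opC ^ ℓ * u ∈ weylDegLT (ℓ + D) := by
    intro D hU hV
    have hmem : ((-1:ℂ) ^ ℓ) • (opC ^ ℓ * u) ∈ weylDegLT (ℓ + D) := by
      have e1' : ((-1:ℂ) ^ ℓ) • (opC ^ ℓ * u) + (Q10 * u + Q11 * v) = 0 := by
        rw [← add_assoc]; exact e1
      have heq : ((-1:ℂ) ^ ℓ) • (opC ^ ℓ * u) = -(Q10 * u + Q11 * v) :=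
        eq_neg_of_add_eq_zero_left e1'
      rw [heq]
      exact neg_mem (add_mem (mul_lt_le h10 hU) (mul_lt_le h11 hV))
    have h2 := Submodule.smul_mem _ (((-1:ℂ)) ^ ℓ) hmem
    rwa [smul_smul, ← mul_pow, neg_mul_neg, one_mul, one_pow, one_smul] at h2
  have hAv : ∀ D : ℕ, u ∈ weylDegLE D → v ∈ weylDegLE D →
      opA ^ ℓ * v ∈ weylDegLT (ℓ + D) := by
    intro D hU hV
    have e0' : opA ^ ℓ * v + (Q00 * u + Q01 * v) = 0 := by
      rw [← e0]; abel
    have heq : opA ^ ℓ * v = -(Q00 * u + Q01 * v) :=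
      eq_neg_of_add_eq_zero_left e0'
    rw [heq]
    exact neg_mem (add_mem (mul_lt_le h00 hU) (mul_lt_le h01 hV))
  have hv0 : v = 0 := by
    by_contra hvne
    set D := max du dv with hD
    have hU : u ∈ weylDegLE D := le_mono (le_max_left _ _) hule
    have hV : v ∈ weylDegLE D := le_mono (le_max_right _ _) hvle
    have h1 : v ∈ weylDegLT D := stepA ℓ hV (hAv D hU hV)
    have hlt : dv < du := by
      by_contra hle
      push_neg at hle
      have : D ≤ dv := max_le hle le_rfl
      exact hex_v hvne (lt_mono this h1)
    have hDu : D = du := max_eq_left (by omega)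
    have h2 : u ∈ weylDegLT du := stepC ℓ hule (hDu ▸ hCu D hU hV)
    obtain ⟨k, hk⟩ : ∃ k, du = k + 1 := ⟨du - 1, by omega⟩
    rw [hk, ← le_eq_lt_succ] at h2
    exact hmin_u k (by omega) h2
  subst hv0
  refine ⟨?_, rfl⟩
  by_contra hune
  have hU : u ∈ weylDegLE du := hule
  have hV : (0:E) ∈ weylDegLE du := zero_mem _
  exact hex_u hune (stepC ℓ hule (hCu du hU hV))


end
end WeylAux

/-- a matrix `Q₀ = [[0, a^ℓ], [(-1)^ℓ (a†)^ℓ, 0]] + Q̄`, with all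
entries of `Q̄` of degree strictly less than `ℓ`, has no nonzero right
annihilator in `Mat₂(ℂ[a, a†])`. -/
theorem no_right_annihilator (ℓ : ℕ) (Qbar A : M2)
    (hQbar : ∀ i j, Qbar i j ∈ weylDegLT ℓ)
    (hA : ∀ i j, A i j ∈ WeylAlg)
    (hann : (!![(0 : E), opA ^ ℓ; ((-1 : ℂ) ^ ℓ) • opC ^ ℓ, 0] + Qbar) * A = 0) :
    A = 0 := by
  have hentry : ∀ i j, ((!![(0 : E), opA ^ ℓ; ((-1 : ℂ) ^ ℓ) • opC ^ ℓ, 0] + Qbar) * A) i j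
      = (0 : M2) i j := fun i j => by rw [hann]
  have hcol : ∀ j, A 0 j = 0 ∧ A 1 j = 0 := by
    intro j
    have h0 := hentry 0 j
    have h1 := hentry 1 j
    simp [Matrix.mul_apply, Matrix.add_apply, Fin.sum_univ_two] at h0 h1
    rw [add_mul] at h0
    rw [add_mul, smul_mul_assoc] at h1
    exact WeylAux.column ℓ (hQbar 0 0) (hQbar 0 1) (hQbar 1 0) (hQbar 1 1)
      (hA 0 j) (hA 1 j) h0 h1
  apply Matrix.ext
  intro i j
  fin_cases i
  · simpa using (hcol j).1
  · simpa using (hcol j).2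
end
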